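/- arXiv:1312.7653 — 8 statements merged into one kernel-verified Lean document; each statement's English description precedes it below -/
import Mathlib

section
/- Let X be a nonempty finite set and let A = (α_{xy})_{x,y∈X} be the infinitesimal matrix of a connected continuous-time Markov chain on X: α_{xy} ≥ 0 for x ≠ y, α_{xx} = −∑_{y≠x} α_{xy}, and for any x,y ∈ X there is a finite sequence x = c_0, c_1, …, c_m = y with α_{c_j c_{j+1}} > 0 for each j. Let q be a stationary probability distribution of A (∑_x q(x)·α_{xy} = 0 for all y) with q(x) > 0 for all x. Let p : ℝ → (X → ℝ) be a differentiable family of probability measures solving the Kolmogorov forward equation ṗ_y(t) = ∑_x p_x(t)·α_{xy}. Then at every time t at which p(t) ≠ q and p(t) is strictly positive, the derivative d/dt D(p(t)|q) is strictly negative; in particular D(p(t)|q) is strictly decreasing as long as p(t) ≠ q. -/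
/-!
Write `r = p t / q`. Zero row sums of `α` and stationarity of `q` turn the derivative of
`D(p(t)|q)` into `∑ x y, q x * α x y * (r x * log (r y / r x) - (r y - r x))`. By
`log s ≤ s - 1` every off-diagonal term is `≤ 0`, strictly along an edge `u → v` with
`r u ≠ r v`. Such an edge exists by connectivity: otherwise `r` is constant, and then `p t = q`.
-/

open Finset Real

theorem mul_log_div_le_sub {a b : ℝ} (ha : 0 < a) (hb : 0 < b) : a * log (b / a) ≤ b - a := by
  have := mul_le_mul_of_nonneg_left (log_le_sub_one_of_pos (div_pos hb ha)) ha.le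
  rwa [mul_sub_one, mul_div_cancel₀ _ ha.ne'] at this

theorem mul_log_div_lt_sub {a b : ℝ} (ha : 0 < a) (hb : 0 < b) (hab : a ≠ b) :
    a * log (b / a) < b - a := by
  have hba : b / a ≠ 1 := fun h => hab ((div_eq_one_iff_eq ha.ne').1 h).symm
  have := mul_lt_mul_of_pos_left (log_lt_sub_one_of_pos (div_pos hb ha) hba) ha
  rwa [mul_sub_one, mul_div_cancel₀ _ ha.ne'] at this

theorem HasDerivAt.mul_log_div_const {f : ℝ → ℝ} {f' c t : ℝ} (hf : HasDerivAt f f' t)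
    (hft : f t ≠ 0) (hc : c ≠ 0) :
    HasDerivAt (fun s => f s * Real.log (f s / c)) (f' * (Real.log (f t / c) + 1)) t := by
  refine (hf.fun_mul ((hf.div_const c).log (div_ne_zero hft hc))).congr_deriv ?_
  field_simp

theorem Relation.ReflTransGen.eq_of_rel_imp_eq {α β : Type*} {r : α → α → Prop} {f : α → β}
    (hf : ∀ u v, r u v → f u = f v) {x y : α} (h : Relation.ReflTransGen r x y) : f x = f y := by
  induction h with
  | refl => rfl
  | tail _ huv ih => exact ih.trans (hf _ _ huv)

theorem Relation.exists_rel_ne_of_forall_reflTransGen {α β : Type*} {r : α → α → Prop}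
    {f : α → β} (h : ∀ x y, Relation.ReflTransGen r x y) (hf : ∃ x y, f x ≠ f y) :
    ∃ u v, r u v ∧ f u ≠ f v := by
  by_contra! hcon
  obtain ⟨x, y, hxy⟩ := hf
  exact hxy ((h x y).eq_of_rel_imp_eq hcon)

theorem sum_eq_zero_of_diag_eq_neg_sum_erase {X M : Type*} [Fintype X] [DecidableEq X]
    [AddCommGroup M] {a : X → M} {x : X} (h : a x = -∑ y ∈ univ.erase x, a y) : ∑ y, a y = 0 := by
  rw [← add_sum_erase _ _ (mem_univ x), h, neg_add_cancel]

section

variable {X : Type*} [Fintype X]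

/-- `Real.log 0 = 0` realises the convention `0 * log 0 = 0`. -/
noncomputable def relEntropy (p q : X → ℝ) : ℝ := ∑ x, p x * log (p x / q x)

theorem hasDerivAt_relEntropy {p : ℝ → X → ℝ} {p' q : X → ℝ} {t : ℝ}
    (hp : ∀ x, HasDerivAt (fun s => p s x) (p' x) t) (hpt : ∀ x, p t x ≠ 0) (hq : ∀ x, q x ≠ 0) :
    HasDerivAt (fun s => relEntropy (p s) q) (∑ x, p' x * (log (p t x / q x) + 1)) t :=
  HasDerivAt.fun_sum fun x _ => (hp x).mul_log_div_const (hpt x) (hq x)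

theorem eq_of_sum_eq_one_of_div_eq_div {p q : X → ℝ} (hq : ∀ x, q x ≠ 0) (hp1 : ∑ x, p x = 1)
    (hq1 : ∑ x, q x = 1) (h : ∀ x y, p x / q x = p y / q y) : p = q := by
  funext x
  refine (div_eq_one_iff_eq (hq x)).1 ?_
  calc p x / q x = ∑ y, p x / q x * q y := by rw [← mul_sum, hq1, mul_one]
    _ = ∑ y, p y := sum_congr rfl fun y _ => by rw [h x y, div_mul_cancel₀ _ (hq y)]
    _ = 1 := hp1

variable {α : X → X → ℝ} {q r : X → ℝ}

theorem sum_forward_mul_log_add_one_eq (hrow : ∀ x, ∑ y, α x y = 0)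
    (hstat : ∀ y, ∑ x, q x * α x y = 0) (hr : ∀ x, r x ≠ 0) :
    ∑ y, (∑ x, q x * r x * α x y) * (log (r y) + 1) =
      ∑ x, ∑ y, q x * α x y * (r x * log (r y / r x) - (r y - r x)) := by
  have hzero : ∑ x, ∑ y, (q x * r x * log (r x) * α x y + q x * α x y * r y) = 0 := by
    simp only [sum_add_distrib, ← mul_sum, hrow, mul_zero, zero_add]
    rw [sum_comm]
    simp only [← sum_mul, hstat, zero_mul, sum_const_zero]
  have hlhs : ∑ y, (∑ x, q x * r x * α x y) * (log (r y) + 1) =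
      ∑ x, ∑ y, q x * r x * α x y * (log (r y) + 1) := by
    simp only [sum_mul]
    exact sum_comm
  rw [hlhs, ← sub_eq_zero, ← hzero, ← sum_sub_distrib]
  refine sum_congr rfl fun x _ => ?_
  rw [← sum_sub_distrib]
  refine sum_congr rfl fun y _ => ?_
  rw [log_div (hr y) (hr x)]
  ring

theorem sum_sum_mul_log_div_sub_neg (hoff : ∀ x y, x ≠ y → 0 ≤ α x y) (hq : ∀ x, 0 < q x)
    (hr : ∀ x, 0 < r x) {u v : X} (huv : 0 < α u v) (hruv : r u ≠ r v) :
    ∑ x, ∑ y, q x * α x y * (r x * log (r y / r x) - (r y - r x)) < 0 := by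
  rw [← Fintype.sum_prod_type']
  refine sum_neg' (fun ⟨x, y⟩ _ => ?_) ⟨(u, v), mem_univ _, ?_⟩
  · rcases eq_or_ne x y with rfl | hxy
    · simp [div_self (hr x).ne']
    · exact mul_nonpos_of_nonneg_of_nonpos (mul_nonneg (hq x).le (hoff x y hxy))
        (sub_nonpos.2 (mul_log_div_le_sub (hr x) (hr y)))
  · exact mul_neg_of_pos_of_neg (mul_pos (hq u) huv)
      (sub_neg.2 (mul_log_div_lt_sub (hr u) (hr v) hruv))

end

theorem entropy_strict_decrease_mutation_general
    {X : Type*} [Fintype X] [DecidableEq X]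
    (α : X → X → ℝ)
    (hα_off : ∀ x y, x ≠ y → 0 ≤ α x y)
    (hα_diag : ∀ x, α x x = -∑ y ∈ Finset.univ.erase x, α x y)
    (hα_conn : ∀ x y, Relation.ReflTransGen (fun u v => 0 < α u v) x y)
    (q : X → ℝ)
    (hq_pos : ∀ x, 0 < q x)
    (hq_sum : ∑ x, q x = 1)
    (hq_stat : ∀ y, ∑ x, q x * α x y = 0)
    (p : ℝ → X → ℝ)
    (hp_sum : ∀ t, ∑ x, p t x = 1)
    (hp_ode : ∀ t y, HasDerivAt (fun s => p s y) (∑ x, p t x * α x y) t)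
    (t : ℝ)
    (hne : p t ≠ q)
    (hpos : ∀ x, 0 < p t x) :
    deriv (fun s => ∑ x, p s x * Real.log (p s x / q x)) t < 0 := by
  set r : X → ℝ := fun x => p t x / q x
  have hr : ∀ x, 0 < r x := fun x => div_pos (hpos x) (hq_pos x)
  have hp_eq : ∀ x, q x * r x = p t x := fun x => mul_div_cancel₀ _ (hq_pos x).ne'
  have hr_ne : ∃ x y, r x ≠ r y := by
    by_contra! h
    exact hne (eq_of_sum_eq_one_of_div_eq_div (fun x => (hq_pos x).ne') (hp_sum t) hq_sum h)
  obtain ⟨u, v, huv, hruv⟩ := Relation.exists_rel_ne_of_forall_reflTransGen hα_conn hr_ne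
  have hrow : ∀ x, ∑ y, α x y = 0 := fun x => sum_eq_zero_of_diag_eq_neg_sum_erase (hα_diag x)
  calc deriv (fun s => relEntropy (p s) q) t
      = ∑ y, (∑ x, q x * r x * α x y) * (log (r y) + 1) := by
        simp only [hp_eq]
        exact (hasDerivAt_relEntropy (hp_ode t) (fun x => (hpos x).ne')
          (fun x => (hq_pos x).ne')).deriv
    _ = ∑ x, ∑ y, q x * α x y * (r x * log (r y / r x) - (r y - r x)) :=
        sum_forward_mul_log_add_one_eq hrow hq_stat fun x => (hr x).ne'
    _ < 0 := sum_sum_mul_log_div_sub_neg hα_off hq_pos hr huv hruv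

/-- For a connected continuous-time Markov chain with infinitesimal matrix `α`
and strictly positive stationary distribution `q`, along any differentiable solution `p` of
the Kolmogorov forward equation, the relative entropy `D(p(t)|q)` has strictly negative
derivative at every time `t` at which `p t ≠ q` and `p t` is strictly positive. -/
theorem entropy_strict_decrease_mutation
    {X : Type*} [Fintype X] [Nonempty X] [DecidableEq X]
    (α : X → X → ℝ)
    (hα_off : ∀ x y, x ≠ y → 0 ≤ α x y)
    (hα_diag : ∀ x, α x x = -∑ y ∈ Finset.univ.erase x, α x y)
    (hα_conn : ∀ x y, Relation.ReflTransGen (fun u v => 0 < α u v) x y)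
    (q : X → ℝ)
    (hq_pos : ∀ x, 0 < q x)
    (hq_sum : ∑ x, q x = 1)
    (hq_stat : ∀ y, ∑ x, q x * α x y = 0)
    (p : ℝ → X → ℝ)
    (hp_nonneg : ∀ t x, 0 ≤ p t x)
    (hp_sum : ∀ t, ∑ x, p t x = 1)
    (hp_ode : ∀ t y, HasDerivAt (fun s => p s y) (∑ x, p t x * α x y) t)
    (t : ℝ)
    (hne : p t ≠ q)
    (hpos : ∀ x, 0 < p t x) :
    deriv (fun s => ∑ x, p s x * Real.log (p s x / q x)) t < 0 :=
  entropy_strict_decrease_mutation_general α hα_off hα_diag hα_conn q hq_pos hq_sum hq_stat p hp_sum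
    hp_ode t hne hpos
end

section
/- Let X be a nonempty finite set, let A = (α_{xy}) be an infinitesimal matrix on X (α_{xy} ≥ 0 for x ≠ y, α_{xx} = −∑_{y≠x} α_{xy}) with stationary distribution q satisfying q(x) > 0 for all x and ∑_x q(x)·α_{xy} = 0 for all y. Let p : ℝ → (X → ℝ) be a differentiable solution of the Kolmogorov forward equation ṗ_y = ∑_x p_x·α_{xy} such that p(t) is a strictly positive probability measure. Then, setting f_x(t) = p_x(t)/q(x), the derivative of the relative entropy satisfies d/dt D(p(t)|q) = −∑_{x,y, x≠y} ( (f_x/f_y)·ln(f_x/f_y) − f_x/f_y + 1 )·q(x)·α_{xy}·f_y, where each summand ( u·ln u − u + 1 ) with u = f_x/f_y > 0 is nonnegative; consequently d/dt D(p(t)|q) ≤ 0. -/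
/-!
Writing `f = p / q`, the forward equation gives `d/dt D(p|q) = ∑_y ṗ_y log f_y`, the extra `∑_y ṗ_y`
vanishing because the rows of `α` sum to zero. Since also `q α = 0`, one may add the null sums
`∑ q_x α_{xy} f_x log f_x`, `∑ q_x α_{xy} f_x` and `∑ q_x α_{xy} f_y`, which regroups the double sum
into `-∑ q_x α_{xy} f_y klFun (f_x / f_y)` with `klFun u = u log u + 1 - u ≥ 0`. The diagonal terms
vanish as `klFun 1 = 0`, and the off-diagonal ones are nonnegative as `α_{xy} ≥ 0` there.
-/

open Real Finset InformationTheory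

theorem hasDerivAt_mul_log_div_const {f : ℝ → ℝ} {f' c t : ℝ} (hf : HasDerivAt f f' t)
    (hft : f t ≠ 0) (hc : c ≠ 0) :
    HasDerivAt (fun s => f s * log (f s / c)) (f' * (log (f t / c) + 1)) t := by
  refine (hf.fun_mul ((hf.div_const c).log (div_ne_zero hft hc))).congr_deriv ?_
  field_simp

section RateMatrix

variable {X : Type*} [Fintype X] (α : X → X → ℝ)

theorem sum_eq_zero_of_diag_eq_neg_sum_erase_s2 [DecidableEq X]
    (hα_diag : ∀ x, α x x = -∑ y ∈ univ.erase x, α x y) (x : X) : ∑ y, α x y = 0 := by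
  rw [← add_sum_erase univ (α x) (mem_univ x), hα_diag]
  ring

theorem sum_sum_mul_eq_zero_of_row_sum_eq_zero (hrow : ∀ x, ∑ y, α x y = 0) (v : X → ℝ) :
    ∑ y, ∑ x, v x * α x y = 0 := by
  rw [sum_comm]
  exact sum_eq_zero fun x _ => by rw [← mul_sum, hrow, mul_zero]

theorem sum_sum_erase_mul_klFun_div_eq [DecidableEq X] (hrow : ∀ x, ∑ y, α x y = 0)
    {q : X → ℝ} (hstat : ∀ y, ∑ x, q x * α x y = 0) {f : X → ℝ} (hf : ∀ x, f x ≠ 0) :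
    ∑ x, ∑ y ∈ univ.erase x, klFun (f x / f y) * q x * α x y * f y =
      -∑ y, (∑ x, q x * f x * α x y) * log (f y) := by
  have hdiag : ∀ x, ∑ y ∈ univ.erase x, klFun (f x / f y) * q x * α x y * f y =
      ∑ y, klFun (f x / f y) * q x * α x y * f y := fun x => by
    rw [← add_sum_erase _ _ (mem_univ x), div_self (hf x), klFun_one]
    ring
  have hterm : ∀ x y, klFun (f x / f y) * q x * α x y * f y =
      q x * f x * log (f x) * α x y - q x * f x * α x y * log (f y)
        + q x * α x y * f y - q x * f x * α x y := by
    intro x y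
    rw [klFun_apply, log_div (hf x) (hf y)]
    field_simp [hf y]
  have hrow' : ∀ v : X → ℝ, ∑ x, ∑ y, v x * α x y = 0 := fun v =>
    sum_eq_zero fun x _ => by rw [← mul_sum, hrow, mul_zero]
  have hstat' : ∑ x, ∑ y, q x * α x y * f y = 0 := by
    rw [sum_comm]
    exact sum_eq_zero fun y _ => by rw [← sum_mul, hstat, zero_mul]
  rw [sum_congr rfl fun x _ => hdiag x]
  simp only [hterm, sum_add_distrib, sum_sub_distrib, hrow', hstat']
  rw [sum_comm]
  simp only [sum_mul]
  ring

end RateMatrix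

theorem entropy_derivative_formula_general
    {X : Type*} [Fintype X] [DecidableEq X]
    (α : X → X → ℝ)
    (hα_off : ∀ x y, x ≠ y → 0 ≤ α x y)
    (hα_diag : ∀ x, α x x = -∑ y ∈ Finset.univ.erase x, α x y)
    (q : X → ℝ)
    (hq_pos : ∀ x, 0 < q x)
    (hq_stat : ∀ y, ∑ x, q x * α x y = 0)
    (p : ℝ → X → ℝ)
    (hp_pos : ∀ t x, 0 < p t x)
    (hp_ode : ∀ t y, HasDerivAt (fun s => p s y) (∑ x, p t x * α x y) t)
    (t : ℝ) :
    (deriv (fun s => ∑ x, p s x * Real.log (p s x / q x)) t =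
      -∑ x, ∑ y ∈ Finset.univ.erase x,
        ((p t x / q x) / (p t y / q y) * Real.log ((p t x / q x) / (p t y / q y))
          - (p t x / q x) / (p t y / q y) + 1) * q x * α x y * (p t y / q y)) ∧
    (∀ x y : X,
      0 ≤ (p t x / q x) / (p t y / q y) * Real.log ((p t x / q x) / (p t y / q y))
          - (p t x / q x) / (p t y / q y) + 1) ∧
    deriv (fun s => ∑ x, p s x * Real.log (p s x / q x)) t ≤ 0 := by
  set f : X → ℝ := fun x => p t x / q x
  have hf : ∀ x, 0 < f x := fun x => div_pos (hp_pos t x) (hq_pos x)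
  have hrow := sum_eq_zero_of_diag_eq_neg_sum_erase_s2 α hα_diag
  have hderiv : deriv (fun s => ∑ x, p s x * log (p s x / q x)) t =
      ∑ y, (∑ x, q x * f x * α x y) * log (f y) := by
    rw [(HasDerivAt.fun_sum fun y _ =>
      hasDerivAt_mul_log_div_const (hp_ode t y) (hp_pos t y).ne' (hq_pos y).ne').deriv]
    simp only [mul_add, mul_one, sum_add_distrib,
      sum_sum_mul_eq_zero_of_row_sum_eq_zero α hrow, add_zero]
    refine sum_congr rfl fun y _ => ?_
    simp only [f, mul_div_cancel₀ _ (hq_pos _).ne']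
  have hformula : deriv (fun s => ∑ x, p s x * log (p s x / q x)) t =
      -∑ x, ∑ y ∈ univ.erase x, klFun (f x / f y) * q x * α x y * f y := by
    rw [hderiv, sum_sum_erase_mul_klFun_div_eq α hrow hq_stat fun x => (hf x).ne', neg_neg]
  have hklFun : ∀ u, u * log u - u + 1 = klFun u := fun u => by rw [klFun_apply]; ring
  simp only [hklFun]
  refine ⟨hformula, fun x y => klFun_nonneg (div_pos (hf x) (hf y)).le, ?_⟩
  rw [hformula, neg_nonpos]
  refine sum_nonneg fun x _ => sum_nonneg fun y hy => ?_
  have hkl := klFun_nonneg (div_pos (hf x) (hf y)).le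
  exact mul_nonneg (mul_nonneg (mul_nonneg hkl (hq_pos x).le)
    (hα_off x y (ne_of_mem_erase hy).symm)) (hf y).le

/-- Along a strictly positive differentiable solution `p` of the Kolmogorov
forward equation for an infinitesimal matrix `α` with strictly positive stationary
distribution `q`, the derivative of the relative entropy `D(p(t)|q)` equals
`-∑_{x≠y} ((f_x/f_y)·ln(f_x/f_y) − f_x/f_y + 1)·q_x·α_{xy}·f_y` with `f_x = p_x/q_x`,
each summand factor `u·ln u − u + 1` is nonnegative, and hence the derivative is `≤ 0`. -/
theorem entropy_derivative_formula
    {X : Type*} [Fintype X] [Nonempty X] [DecidableEq X]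
    (α : X → X → ℝ)
    (hα_off : ∀ x y, x ≠ y → 0 ≤ α x y)
    (hα_diag : ∀ x, α x x = -∑ y ∈ Finset.univ.erase x, α x y)
    (q : X → ℝ)
    (hq_pos : ∀ x, 0 < q x)
    (hq_sum : ∑ x, q x = 1)
    (hq_stat : ∀ y, ∑ x, q x * α x y = 0)
    (p : ℝ → X → ℝ)
    (hp_pos : ∀ t x, 0 < p t x)
    (hp_sum : ∀ t, ∑ x, p t x = 1)
    (hp_ode : ∀ t y, HasDerivAt (fun s => p s y) (∑ x, p t x * α x y) t)
    (t : ℝ) :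
    (deriv (fun s => ∑ x, p s x * Real.log (p s x / q x)) t =
      -∑ x, ∑ y ∈ Finset.univ.erase x,
        ((p t x / q x) / (p t y / q y) * Real.log ((p t x / q x) / (p t y / q y))
          - (p t x / q x) / (p t y / q y) + 1) * q x * α x y * (p t y / q y)) ∧
    (∀ x y : X,
      0 ≤ (p t x / q x) / (p t y / q y) * Real.log ((p t x / q x) / (p t y / q y))
          - (p t x / q x) / (p t y / q y) + 1) ∧
    deriv (fun s => ∑ x, p s x * Real.log (p s x / q x)) t ≤ 0 :=
  entropy_derivative_formula_general α hα_off hα_diag q hq_pos hq_stat p hp_pos hp_ode t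
end

section
/- Fix a finite alphabet K, genome length n, the genome space X = (Fin n → K), a subset I ⊆ Fin n, a symmetric nonnegative similarity function φ on pairs of I-substrings (φ(a,b) = φ(b,a) ≥ 0 for a,b : I → K), a constant κ·dt > 0, and a probability measure μ on X. Define the recombination transition matrix P^{(I)}_μ by P^{(I)}_μ(x→y) = κ·dt·φ(x_I, y_I)·μ_I(y_I) when y ≠ x and y agrees with x outside I, P^{(I)}_μ(x→y) = 0 when y ≠ x and y differs from x outside I, and P^{(I)}_μ(x→x) = 1 − ∑_{y≠x} P^{(I)}_μ(x→y); assume κ·dt is small enough that all diagonal entries are nonnegative, so P^{(I)}_μ is a stochastic matrix. Then the product measure μ̂(x) = μ_{Λ∖I}(x_{Λ∖I})·μ_I(x_I) is invariant under P^{(I)}_μ: ∑_y μ̂(y)·P^{(I)}_μ(y→x) = μ̂(x) for every x ∈ X. -/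
/-- The substring of a genome `x : Fin n → K` on a subset `I` of positions. -/
def subword {K : Type*} {n : ℕ} (I : Finset (Fin n)) (x : Fin n → K) : ↥I → K :=
  fun i => x i.1

/-- The marginal distribution of a measure `μ` on the genome space on a subset `I`. -/
def marginal {K : Type*} [Fintype K] [DecidableEq K] {n : ℕ}
    (μ : (Fin n → K) → ℝ) (I : Finset (Fin n)) (a : ↥I → K) : ℝ :=
  ∑ x : Fin n → K, if subword I x = a then μ x else 0

/-!
Recombination only moves between genomes with the same part outside `I`, at a rate symmetric in
the two `I`-parts times the `μ_I`-mass of the target. Hence the product measure `μ̂` satisfies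
detailed balance, `μ̂ y · P(y → x) = μ̂ x · P(x → y)`, and detailed balance for a matrix whose rows
sum to one gives invariance.
-/

open Finset

def DetailedBalance {α R : Type*} [Mul R] (π : α → R) (P : α → α → R) : Prop :=
  ∀ x y, π x * P x y = π y * P y x

theorem DetailedBalance.sum_mul_eq {α R : Type*} [Fintype α] [DecidableEq α] [CommRing R]
    {π : α → R} {P : α → α → R} (hP : DetailedBalance π P)
    (hP_diag : ∀ x, P x x = 1 - ∑ y ∈ univ.erase x, P x y) (x : α) :
    ∑ y, π y * P y x = π x := by
  have hflow : ∑ y ∈ univ.erase x, π y * P y x = π x * ∑ y ∈ univ.erase x, P x y := by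
    rw [mul_sum]
    exact sum_congr rfl fun y _ => (hP x y).symm
  rw [← sum_erase_add _ _ (mem_univ x), hflow, hP_diag x]
  ring

theorem detailedBalance_recombination
    {K : Type*} {n : ℕ} (I : Finset (Fin n))
    {φ : (↥I → K) → (↥I → K) → ℝ} (hφ_symm : ∀ a b, φ a b = φ b a) (κdt : ℝ)
    (f : (↥Iᶜ → K) → ℝ) (g : (↥I → K) → ℝ) {P : (Fin n → K) → (Fin n → K) → ℝ}
    (hP_off : ∀ x y, y ≠ x → subword Iᶜ y = subword Iᶜ x →
      P x y = κdt * φ (subword I x) (subword I y) * g (subword I y))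
    (hP_zero : ∀ x y, y ≠ x → subword Iᶜ y ≠ subword Iᶜ x → P x y = 0) :
    DetailedBalance (fun x => f (subword Iᶜ x) * g (subword I x)) P := by
  intro x y
  dsimp only
  obtain rfl | hyx := eq_or_ne y x
  · rfl
  by_cases hc : subword Iᶜ y = subword Iᶜ x
  · rw [hP_off x y hyx hc, hP_off y x hyx.symm hc.symm, hc, hφ_symm]
    ring
  · rw [hP_zero x y hyx hc, hP_zero y x hyx.symm (Ne.symm hc), mul_zero, mul_zero]

theorem recombination_invariant_measure_general
    {K : Type*} [Fintype K] [DecidableEq K] {n : ℕ}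
    (I : Finset (Fin n))
    (φ : (↥I → K) → (↥I → K) → ℝ)
    (hφ_symm : ∀ a b, φ a b = φ b a)
    (κdt : ℝ)
    (μ : (Fin n → K) → ℝ)
    (P : (Fin n → K) → (Fin n → K) → ℝ)
    (hP_off : ∀ x y, y ≠ x → subword Iᶜ y = subword Iᶜ x →
      P x y = κdt * φ (subword I x) (subword I y) * marginal μ I (subword I y))
    (hP_zero : ∀ x y, y ≠ x → subword Iᶜ y ≠ subword Iᶜ x → P x y = 0)
    (hP_diag : ∀ x, P x x = 1 - ∑ y ∈ Finset.univ.erase x, P x y) :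
    ∀ x : Fin n → K,
      ∑ y, (marginal μ Iᶜ (subword Iᶜ y) * marginal μ I (subword I y)) * P y x =
        marginal μ Iᶜ (subword Iᶜ x) * marginal μ I (subword I x) :=
  (detailedBalance_recombination I hφ_symm κdt (marginal μ Iᶜ) (marginal μ I) hP_off
    hP_zero).sum_mul_eq hP_diag

/-- the product measure `μ̂(x) = μ_{Λ∖I}(x_{Λ∖I})·μ_I(x_I)` is invariant under
the recombination transition matrix `P^{(I)}_μ`. -/
theorem recombination_invariant_measure
    {K : Type*} [Fintype K] [DecidableEq K] {n : ℕ}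
    (I : Finset (Fin n))
    (φ : (↥I → K) → (↥I → K) → ℝ)
    (hφ_symm : ∀ a b, φ a b = φ b a)
    (hφ_nonneg : ∀ a b, 0 ≤ φ a b)
    (κdt : ℝ) (hκdt : 0 < κdt)
    (μ : (Fin n → K) → ℝ)
    (hμ_nonneg : ∀ x, 0 ≤ μ x)
    (hμ_sum : ∑ x, μ x = 1)
    (P : (Fin n → K) → (Fin n → K) → ℝ)
    (hP_off : ∀ x y, y ≠ x → subword Iᶜ y = subword Iᶜ x →
      P x y = κdt * φ (subword I x) (subword I y) * marginal μ I (subword I y))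
    (hP_zero : ∀ x y, y ≠ x → subword Iᶜ y ≠ subword Iᶜ x → P x y = 0)
    (hP_diag : ∀ x, P x x = 1 - ∑ y ∈ Finset.univ.erase x, P x y)
    (hP_diag_nonneg : ∀ x, 0 ≤ P x x) :
    ∀ x : Fin n → K,
      ∑ y, (marginal μ Iᶜ (subword Iᶜ y) * marginal μ I (subword I y)) * P y x =
        marginal μ Iᶜ (subword Iᶜ x) * marginal μ I (subword I x) :=
  recombination_invariant_measure_general I φ hφ_symm κdt μ P hP_off hP_zero hP_diag
end

section
/- Fix a finite alphabet K, genome length n, the genome space X = (Fin n → K), a subset I ⊆ Fin n, a symmetric nonnegative similarity function φ (φ(a,b) = φ(b,a) ≥ 0 for a,b : I → K), κ·dt > 0, and a probability measure μ on X; let P^{(I)}_μ be the recombination transition matrix with off-diagonal entries P^{(I)}_μ(x→y) = κ·dt·φ(x_I,y_I)·μ_I(y_I) if y agrees with x outside I (and 0 otherwise), diagonal entries 1 minus the row sums of the off-diagonal entries, assumed nonnegative. Then for every probability measure ν on X whose marginal distributions satisfy ν_{Λ∖I} = μ_{Λ∖I} and ν_I = μ_I, the measure νP^{(I)}_μ defined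 by (νP^{(I)}_μ)(x) = ∑_y ν(y)·P^{(I)}_μ(y→x) has the same marginal distributions: (νP^{(I)}_μ)_{Λ∖I} = μ_{Λ∖I} and (νP^{(I)}_μ)_I = μ_I. -/
open Finset

section StochasticCompletion

variable {α : Type*} [Fintype α] [DecidableEq α]

theorem sum_eq_one_iff_eq_one_sub_sum_erase (f : α → ℝ) (c : α) :
    ∑ a, f a = 1 ↔ f c = 1 - ∑ a ∈ univ.erase c, f a := by
  rw [← add_sum_erase univ f (mem_univ c)]
  constructor <;> intro h <;> linarith

def stochasticCompletion (r : α → α → ℝ) (c a : α) : ℝ :=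
  if a = c then 1 - ∑ a' ∈ univ.erase c, r c a' else r c a

theorem stochasticCompletion_of_ne (r : α → α → ℝ) {c a : α} (h : a ≠ c) :
    stochasticCompletion r c a = r c a :=
  if_neg h

theorem sum_stochasticCompletion (r : α → α → ℝ) (c : α) :
    ∑ a, stochasticCompletion r c a = 1 := by
  rw [sum_eq_one_iff_eq_one_sub_sum_erase _ c,
    sum_congr rfl fun a ha => stochasticCompletion_of_ne r (ne_of_mem_erase ha)]
  exact if_pos rfl

theorem sum_mul_stochasticCompletion_of_detailed_balance {r : α → α → ℝ} {m : α → ℝ}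
    (hbalance : ∀ a c, m c * r c a = m a * r a c) (a : α) :
    ∑ c, m c * stochasticCompletion r c a = m a := by
  calc ∑ c, m c * stochasticCompletion r c a
      = ∑ c, m a * stochasticCompletion r a c := by
        refine sum_congr rfl fun c _ => ?_
        rcases eq_or_ne c a with rfl | hca
        · rfl
        · rw [stochasticCompletion_of_ne r hca.symm, stochasticCompletion_of_ne r hca, hbalance]
    _ = m a := by rw [← mul_sum, sum_stochasticCompletion, mul_one]

end StochasticCompletion

section Genome

variable {K : Type*} {n : ℕ}

def combine (I : Finset (Fin n)) (a : ↥I → K) (b : ↥(Iᶜ) → K) : Fin n → K :=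
  fun i => if h : i ∈ I then a ⟨i, h⟩ else b ⟨i, mem_compl.mpr h⟩

@[simp] theorem subword_combine (I : Finset (Fin n)) (a : ↥I → K) (b : ↥(Iᶜ) → K) :
    subword I (combine I a b) = a := by
  funext i
  simp [subword, combine, i.2]

@[simp] theorem subword_compl_combine (I : Finset (Fin n)) (a : ↥I → K) (b : ↥(Iᶜ) → K) :
    subword Iᶜ (combine I a b) = b := by
  funext i
  simp [subword, combine, mem_compl.mp i.2]

theorem eq_of_subword_eq_of_subword_compl_eq {I : Finset (Fin n)} {x x' : Fin n → K}
    (h : subword I x = subword I x') (hc : subword Iᶜ x = subword Iᶜ x') : x = x' := by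
  funext i
  by_cases hi : i ∈ I
  · exact congrFun h ⟨i, hi⟩
  · exact congrFun hc ⟨i, mem_compl.mpr hi⟩

variable [Fintype K] [DecidableEq K]

theorem marginal_sum_mul (ν : (Fin n → K) → ℝ) (P : (Fin n → K) → (Fin n → K) → ℝ)
    (I : Finset (Fin n)) (a : ↥I → K) :
    marginal (fun x => ∑ y, ν y * P y x) I a = ∑ y, ν y * marginal (P y) I a := by
  simp only [marginal, mul_sum, mul_ite, mul_zero]
  rw [sum_comm]
  refine sum_congr rfl fun x _ => ?_
  split_ifs <;> simp

theorem sum_marginal_mul (ν : (Fin n → K) → ℝ) (I : Finset (Fin n)) (h : (↥I → K) → ℝ) :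
    ∑ c, marginal ν I c * h c = ∑ y, ν y * h (subword I y) := by
  simp only [marginal, sum_mul, ite_mul, zero_mul]
  rw [sum_comm]
  simp

theorem sum_marginal (ν : (Fin n → K) → ℝ) (I : Finset (Fin n)) :
    ∑ c, marginal ν I c = ∑ y, ν y := by
  simpa using sum_marginal_mul ν I 1

theorem marginal_eq_ite_of_supported {f : (Fin n → K) → ℝ} {I : Finset (Fin n)} {b₀ : ↥I → K}
    (hf : ∀ x, subword I x ≠ b₀ → f x = 0) (b : ↥I → K) :
    marginal f I b = if b₀ = b then ∑ x, f x else 0 := by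
  unfold marginal
  split_ifs with hb
  · subst hb
    refine sum_congr rfl fun x _ => ?_
    split_ifs with hx
    · rfl
    · exact (hf x hx).symm
  · refine sum_eq_zero fun x _ => ?_
    split_ifs with hx
    · exact hf x (hx ▸ Ne.symm hb)
    · rfl

theorem marginal_eq_apply_combine_of_supported {f : (Fin n → K) → ℝ} {I : Finset (Fin n)}
    {d : ↥(Iᶜ) → K} (hf : ∀ x, subword Iᶜ x ≠ d → f x = 0) (a : ↥I → K) :
    marginal f I a = f (combine I a d) := by
  unfold marginal
  rw [sum_eq_single (combine I a d) _ (by simp), if_pos (subword_combine I a d)]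
  intro x _ hx
  split_ifs with ha
  · refine hf x fun hd => hx (eq_of_subword_eq_of_subword_compl_eq (I := I) ?_ ?_) <;> simpa
  · rfl

/-- The `I`-marginal of a row of a recombination matrix on `I` with rates `r`. -/
theorem marginal_row_eq_stochasticCompletion {I : Finset (Fin n)} (r : (↥I → K) → (↥I → K) → ℝ)
    {f : (Fin n → K) → ℝ} {y : Fin n → K} (hsum : ∑ x, f x = 1)
    (hsupp : ∀ x, subword Iᶜ x ≠ subword Iᶜ y → f x = 0)
    (hoff : ∀ x, x ≠ y → subword Iᶜ x = subword Iᶜ y → f x = r (subword I y) (subword I x))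
    (a : ↥I → K) :
    marginal f I a = stochasticCompletion r (subword I y) a := by
  have hne : ∀ a, a ≠ subword I y → marginal f I a = r (subword I y) a := by
    intro a ha
    rw [marginal_eq_apply_combine_of_supported hsupp,
      hoff _ (fun h => ha (by rw [← h, subword_combine])) (subword_compl_combine I a _),
      subword_combine]
  rcases eq_or_ne a (subword I y) with rfl | ha
  · rw [← sum_marginal f I, sum_eq_one_iff_eq_one_sub_sum_erase _ (subword I y)] at hsum
    rw [hsum, sum_congr rfl fun a ha => hne a (ne_of_mem_erase ha)]
    exact (if_pos rfl).symm
  · rw [hne a ha, stochasticCompletion_of_ne r ha]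

end Genome

theorem recombination_preserves_marginals_general
    {K : Type*} [Fintype K] [DecidableEq K] {n : ℕ}
    (I : Finset (Fin n))
    (φ : (↥I → K) → (↥I → K) → ℝ)
    (hφ_symm : ∀ a b, φ a b = φ b a)
    (κdt : ℝ)
    (μ : (Fin n → K) → ℝ)
    (P : (Fin n → K) → (Fin n → K) → ℝ)
    (hP_off : ∀ x y, y ≠ x → subword Iᶜ y = subword Iᶜ x →
      P x y = κdt * φ (subword I x) (subword I y) * marginal μ I (subword I y))
    (hP_zero : ∀ x y, y ≠ x → subword Iᶜ y ≠ subword Iᶜ x → P x y = 0)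
    (hP_diag : ∀ x, P x x = 1 - ∑ y ∈ Finset.univ.erase x, P x y)
    (ν : (Fin n → K) → ℝ)
    (hν_margI : ∀ a : ↥I → K, marginal ν I a = marginal μ I a)
    (hν_margIc : ∀ b : ↥(Iᶜ) → K, marginal ν Iᶜ b = marginal μ Iᶜ b) :
    (∀ a : ↥I → K, marginal (fun x => ∑ y, ν y * P y x) I a = marginal μ I a) ∧
    (∀ b : ↥(Iᶜ) → K, marginal (fun x => ∑ y, ν y * P y x) Iᶜ b = marginal μ Iᶜ b) := by
  set r : (↥I → K) → (↥I → K) → ℝ := fun c a => κdt * φ c a * marginal μ I a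
  have hrow : ∀ y, ∑ x, P y x = 1 := fun y =>
    (sum_eq_one_iff_eq_one_sub_sum_erase (P y) y).mpr (hP_diag y)
  have hsupp : ∀ y x, subword Iᶜ x ≠ subword Iᶜ y → P y x = 0 := fun y x hx =>
    hP_zero y x (fun h => hx (h ▸ rfl)) hx
  have hbalance : ∀ a c, marginal μ I c * r c a = marginal μ I a * r a c := fun a c => by
    simp only [r, hφ_symm c a]
    ring
  refine ⟨fun a => ?_, fun b => ?_⟩
  · calc marginal (fun x => ∑ y, ν y * P y x) I a
        = ∑ y, ν y * stochasticCompletion r (subword I y) a := by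
          rw [marginal_sum_mul]
          refine sum_congr rfl fun y _ => ?_
          rw [marginal_row_eq_stochasticCompletion r (hrow y) (hsupp y)
            (fun x hx hxc => hP_off y x hx hxc)]
      _ = ∑ c, marginal μ I c * stochasticCompletion r c a := by
          simp only [← hν_margI, sum_marginal_mul ν I (fun c => stochasticCompletion r c a)]
      _ = marginal μ I a := sum_mul_stochasticCompletion_of_detailed_balance hbalance a
  · calc marginal (fun x => ∑ y, ν y * P y x) Iᶜ b
        = ∑ y, ν y * if subword Iᶜ y = b then 1 else 0 := by
          simp only [marginal_sum_mul, marginal_eq_ite_of_supported (hsupp _), hrow]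
      _ = marginal ν Iᶜ b := by simp [marginal]
      _ = marginal μ Iᶜ b := hν_margIc b

/-- the recombination transition matrix `P^{(I)}_μ` preserves the marginal
distributions on `I` and on its complement, for every probability measure `ν` whose
marginals coincide with those of `μ`. -/
theorem recombination_preserves_marginals
    {K : Type*} [Fintype K] [DecidableEq K] {n : ℕ}
    (I : Finset (Fin n))
    (φ : (↥I → K) → (↥I → K) → ℝ)
    (hφ_symm : ∀ a b, φ a b = φ b a)
    (hφ_nonneg : ∀ a b, 0 ≤ φ a b)
    (κdt : ℝ) (hκdt : 0 < κdt)
    (μ : (Fin n → K) → ℝ)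
    (hμ_nonneg : ∀ x, 0 ≤ μ x)
    (hμ_sum : ∑ x, μ x = 1)
    (P : (Fin n → K) → (Fin n → K) → ℝ)
    (hP_off : ∀ x y, y ≠ x → subword Iᶜ y = subword Iᶜ x →
      P x y = κdt * φ (subword I x) (subword I y) * marginal μ I (subword I y))
    (hP_zero : ∀ x y, y ≠ x → subword Iᶜ y ≠ subword Iᶜ x → P x y = 0)
    (hP_diag : ∀ x, P x x = 1 - ∑ y ∈ Finset.univ.erase x, P x y)
    (hP_diag_nonneg : ∀ x, 0 ≤ P x x)
    (ν : (Fin n → K) → ℝ)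
    (hν_nonneg : ∀ x, 0 ≤ ν x)
    (hν_sum : ∑ x, ν x = 1)
    (hν_margI : ∀ a : ↥I → K, marginal ν I a = marginal μ I a)
    (hν_margIc : ∀ b : ↥(Iᶜ) → K, marginal ν Iᶜ b = marginal μ Iᶜ b) :
    (∀ a : ↥I → K, marginal (fun x => ∑ y, ν y * P y x) I a = marginal μ I a) ∧
    (∀ b : ↥(Iᶜ) → K, marginal (fun x => ∑ y, ν y * P y x) Iᶜ b = marginal μ Iᶜ b) :=
  recombination_preserves_marginals_general I φ hφ_symm κdt μ P hP_off hP_zero hP_diag ν hν_margI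
    hν_margIc
end

section
/- Fix a finite alphabet K, genome length n, the genome space X = (Fin n → K), a subset I ⊆ Fin n, a symmetric nonnegative similarity function φ on pairs of I-substrings, κ·dt > 0, and a strictly positive probability measure μ on X; let P^{(I)}_μ be the recombination transition matrix (off-diagonal entries κ·dt·φ(x_I,y_I)·μ_I(y_I) for y agreeing with x outside I, zero otherwise, diagonal entries making rows sum to 1 and assumed nonnegative), and let μ̂(x) = μ_{Λ∖I}(x_{Λ∖I})·μ_I(x_I). Then ∑_x (ln μ̂(x))·(μP^{(I)}_μ)(x) = ∑_x (ln μ̂(x))·μ(x), where (μP^{(I)}_μ)(x) = ∑_y μ(y)·P^{(I)}_μ(y→x). -/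
/-!
Since the rows of `P` sum to one, the change of the mean of `f = ln μ̂` is
`∑_y μ(y) ∑_x P(y→x) (f x - f y)`. A transition only rewrites the `I`-part of a genome, so
`f x - f y = g(x_I) - g(y_I)` with `g = ln μ_I`, and summing out the `Λ∖I`-part of `y` turns the
change into `∑_{a,b} κ·dt·μ_I(b) φ(b,a) μ_I(a) (g a - g b)`, which vanishes because the
weight is symmetric in `a, b` (detailed balance of `P` with respect to `μ_I`).
-/

open Finset

section FiniteSums

variable {α R : Type*} [Fintype α] [CommRing R]

theorem sum_mul_sum_mul_eq_add_of_sum_eq_one (μ f : α → R) (P : α → α → R)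
    (hrow : ∀ y, ∑ x, P y x = 1) :
    ∑ x, f x * ∑ y, μ y * P y x = ∑ x, f x * μ x + ∑ y, μ y * ∑ x, P y x * (f x - f y) := by
  have hdrift : ∀ y, μ y * ∑ x, P y x * (f x - f y) = ∑ x, f x * (μ y * P y x) - f y * μ y :=
    fun y => calc
      μ y * ∑ x, P y x * (f x - f y) = ∑ x, f x * (μ y * P y x) - f y * μ y * ∑ x, P y x := by
        rw [mul_sum, mul_sum, ← sum_sub_distrib]
        exact sum_congr rfl fun x _ => by ring
      _ = ∑ x, f x * (μ y * P y x) - f y * μ y := by rw [hrow, mul_one]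
  simp only [hdrift, sum_sub_distrib, mul_sum]
  rw [sum_comm]
  ring

theorem sum_sum_mul_sub_eq_zero_of_symm (w : α → α → R) (hw : ∀ a b, w a b = w b a)
    (g : α → R) :
    ∑ b, ∑ a, w b a * (g a - g b) = 0 := by
  have hswap : ∑ b, ∑ a, w b a * g a = ∑ b, ∑ a, w b a * g b := by
    rw [sum_comm]
    exact sum_congr rfl fun _ _ => sum_congr rfl fun _ _ => by rw [hw]
  simp only [mul_sub, sum_sub_distrib, hswap, sub_self]

end FiniteSums

section Genome

variable {K : Type*} {n : ℕ} (I : Finset (Fin n))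

def glue (a : ↥I → K) (c : ↥Iᶜ → K) : Fin n → K :=
  fun i => if h : i ∈ I then a ⟨i, h⟩ else c ⟨i, mem_compl.2 h⟩

theorem subword_glue (a : ↥I → K) (c : ↥Iᶜ → K) : subword I (glue I a c) = a := by
  funext i
  simp [subword, glue, i.2]

theorem subword_compl_glue (a : ↥I → K) (c : ↥Iᶜ → K) : subword Iᶜ (glue I a c) = c := by
  funext i
  simp [subword, glue, mem_compl.1 i.2]

theorem glue_subword (x : Fin n → K) : glue I (subword I x) (subword Iᶜ x) = x := by
  funext i
  by_cases h : i ∈ I <;> simp [glue, subword, h]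

def subwordEquiv : (Fin n → K) ≃ (↥I → K) × (↥Iᶜ → K) where
  toFun x := (subword I x, subword Iᶜ x)
  invFun p := glue I p.1 p.2
  left_inv := glue_subword I
  right_inv p := by simp [subword_glue, subword_compl_glue]

variable [Fintype K] [DecidableEq K]

theorem sum_ite_subword_compl_eq {M : Type*} [AddCommMonoid M] (c : ↥Iᶜ → K)
    (H : (↥I → K) → M) :
    ∑ x, (if subword Iᶜ x = c then H (subword I x) else 0) = ∑ a, H a := by
  rw [← (subwordEquiv I).symm.sum_comp, Fintype.sum_prod_type]
  simp [subwordEquiv, subword_glue, subword_compl_glue]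

theorem sum_mul_comp_subword (μ : (Fin n → K) → ℝ) (Ψ : (↥I → K) → ℝ) :
    ∑ x, μ x * Ψ (subword I x) = ∑ a, marginal μ I a * Ψ a := by
  simp only [marginal, sum_mul, ite_mul, zero_mul]
  rw [sum_comm]
  simp

theorem marginal_subword_pos {μ : (Fin n → K) → ℝ} (hμ : ∀ x, 0 < μ x) (x : Fin n → K) :
    0 < marginal μ I (subword I x) := by
  rw [marginal]
  exact sum_pos' (fun y _ => by split_ifs <;> simp [(hμ y).le]) ⟨x, mem_univ x, by simp [hμ x]⟩

theorem sum_mul_sub_eq_of_rewrites_subword {M : Type*} [CommRing M]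
    (P : (Fin n → K) → (Fin n → K) → M) (r : (↥I → K) → (↥I → K) → M)
    (hP_off : ∀ x y, y ≠ x → subword Iᶜ y = subword Iᶜ x → P x y = r (subword I x) (subword I y))
    (hP_zero : ∀ x y, y ≠ x → subword Iᶜ y ≠ subword Iᶜ x → P x y = 0)
    (f : (Fin n → K) → M) (g : (↥I → K) → M) (h : (↥Iᶜ → K) → M)
    (hf : ∀ x, f x = h (subword Iᶜ x) + g (subword I x)) (y : Fin n → K) :
    ∑ x, P y x * (f x - f y) =
      ∑ a, r (subword I y) a * (g a - g (subword I y)) := by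
  rw [← sum_ite_subword_compl_eq I (subword Iᶜ y)]
  refine sum_congr rfl fun x _ => ?_
  by_cases hxy : x = y
  · simp [hxy]
  by_cases hc : subword Iᶜ x = subword Iᶜ y
  · rw [if_pos hc, hP_off y x hxy hc, hf, hf, hc]
    ring
  · rw [if_neg hc, hP_zero y x hxy hc, zero_mul]

end Genome

theorem recombination_preserves_log_product_mean_general
    {K : Type*} [Fintype K] [DecidableEq K] {n : ℕ}
    (I : Finset (Fin n))
    (φ : (↥I → K) → (↥I → K) → ℝ)
    (hφ_symm : ∀ a b, φ a b = φ b a)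
    (κdt : ℝ)
    (μ : (Fin n → K) → ℝ)
    (hμ_pos : ∀ x, 0 < μ x)
    (P : (Fin n → K) → (Fin n → K) → ℝ)
    (hP_off : ∀ x y, y ≠ x → subword Iᶜ y = subword Iᶜ x →
      P x y = κdt * φ (subword I x) (subword I y) * marginal μ I (subword I y))
    (hP_zero : ∀ x y, y ≠ x → subword Iᶜ y ≠ subword Iᶜ x → P x y = 0)
    (hP_diag : ∀ x, P x x = 1 - ∑ y ∈ Finset.univ.erase x, P x y) :
    ∑ x, Real.log (marginal μ Iᶜ (subword Iᶜ x) * marginal μ I (subword I x)) *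
        (∑ y, μ y * P y x) =
      ∑ x, Real.log (marginal μ Iᶜ (subword Iᶜ x) * marginal μ I (subword I x)) * μ x := by
  have hrow : ∀ y, ∑ x, P y x = 1 := fun y => by
    rw [← add_sum_erase _ _ (mem_univ y), hP_diag]
    ring
  have hlog : ∀ x, Real.log (marginal μ Iᶜ (subword Iᶜ x) * marginal μ I (subword I x)) =
      Real.log (marginal μ Iᶜ (subword Iᶜ x)) + Real.log (marginal μ I (subword I x)) :=
    fun x => Real.log_mul (marginal_subword_pos Iᶜ hμ_pos x).ne'
      (marginal_subword_pos I hμ_pos x).ne'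
  set g : (↥I → K) → ℝ := fun a => Real.log (marginal μ I a)
  set r : (↥I → K) → (↥I → K) → ℝ := fun b a => κdt * φ b a * marginal μ I a
  rw [sum_mul_sum_mul_eq_add_of_sum_eq_one μ _ P hrow, add_eq_left,
    sum_congr rfl fun y _ => congrArg (μ y * ·) (sum_mul_sub_eq_of_rewrites_subword I P r
      hP_off hP_zero _ g (fun c => Real.log (marginal μ Iᶜ c)) hlog y),
    sum_mul_comp_subword I μ fun b => ∑ a, r b a * (g a - g b)]
  simp only [mul_sum, ← mul_assoc]
  exact sum_sum_mul_sub_eq_zero_of_symm _ (fun b a => by simp only [r, hφ_symm b a]; ring) g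

/-- one step of the recombination transition matrix `P^{(I)}_μ` leaves the
mean of `ln μ̂` unchanged, where `μ̂(x) = μ_{Λ∖I}(x_{Λ∖I})·μ_I(x_I)`. -/
theorem recombination_preserves_log_product_mean
    {K : Type*} [Fintype K] [DecidableEq K] {n : ℕ}
    (I : Finset (Fin n))
    (φ : (↥I → K) → (↥I → K) → ℝ)
    (hφ_symm : ∀ a b, φ a b = φ b a)
    (hφ_nonneg : ∀ a b, 0 ≤ φ a b)
    (κdt : ℝ) (hκdt : 0 < κdt)
    (μ : (Fin n → K) → ℝ)
    (hμ_pos : ∀ x, 0 < μ x)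
    (hμ_sum : ∑ x, μ x = 1)
    (P : (Fin n → K) → (Fin n → K) → ℝ)
    (hP_off : ∀ x y, y ≠ x → subword Iᶜ y = subword Iᶜ x →
      P x y = κdt * φ (subword I x) (subword I y) * marginal μ I (subword I y))
    (hP_zero : ∀ x y, y ≠ x → subword Iᶜ y ≠ subword Iᶜ x → P x y = 0)
    (hP_diag : ∀ x, P x x = 1 - ∑ y ∈ Finset.univ.erase x, P x y)
    (hP_diag_nonneg : ∀ x, 0 ≤ P x x) :
    ∑ x, Real.log (marginal μ Iᶜ (subword Iᶜ x) * marginal μ I (subword I x)) *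
        (∑ y, μ y * P y x) =
      ∑ x, Real.log (marginal μ Iᶜ (subword Iᶜ x) * marginal μ I (subword I x)) * μ x :=
  recombination_preserves_log_product_mean_general I φ hφ_symm κdt μ hμ_pos P hP_off hP_zero hP_diag
end

section
/- Fix a finite alphabet K, genome length n, X = (Fin n → K), for each i ∈ Fin n an infinitesimal matrix A_i = (α_i(a,b)) on K with strictly positive stationary distribution q_i (q_i(a) > 0, ∑_a q_i(a)·α_i(a,b) = 0), a constant κ ≥ 0, and for each subset I ⊆ Fin n a symmetric nonnegative similarity function φ on pairs of I-substrings (φ(a,b) = φ(b,a) ≥ 0). Then the product distribution q_Λ(x) = ∏_i q_i(x_i) is a fixed point of the mutation–recombination equation: the right-hand side ∑_i ∑_{y_i∈K} ( α_i(y_i,x_i)·μ(x_{Λ∖i}, y_i) − α_i(x_i,y_i)·μ(x) ) + κ·∑_{I⊆Λ} ∑_{y_I} ( φ(y_I,x_I)·μ_I(x_I)·μ(x_{Λ∖I}, y_I) − φ(x_I,y_I)·μ_I(y_I)·μ(x) ) vanishes identically in x when μ = q_Λ. -/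
/-- `(x_{Λ∖I}, a)`: the genome obtained from `x` by replacing its restriction to `I`
with `a`. -/
def substGenome {K : Type*} {n : ℕ} (I : Finset (Fin n)) (x : Fin n → K) (a : ↥I → K) :
    Fin n → K :=
  fun j => if h : j ∈ I then a ⟨j, h⟩ else x j

/-- The right-hand side of the mutation–recombination equation. -/
def mutRecRHS {K : Type*} [Fintype K] [DecidableEq K] {n : ℕ}
    (α : Fin n → K → K → ℝ) (κ : ℝ)
    (φ : (I : Finset (Fin n)) → (↥I → K) → (↥I → K) → ℝ)
    (μ : (Fin n → K) → ℝ) (x : Fin n → K) : ℝ :=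
  (∑ i : Fin n, ∑ b : K,
      (α i b (x i) * μ (Function.update x i b) - α i (x i) b * μ x))
  + κ * ∑ I : Finset (Fin n), ∑ a : ↥I → K,
      (φ I a (subword I x) * marginal μ I (subword I x) * μ (substGenome I x a)
        - φ I (subword I x) a * marginal μ I a * μ x)

open Finset Function

lemma sum_eq_zero_of_apply_eq_neg_sum_erase {ι M : Type*} [Fintype ι] [DecidableEq ι]
    [AddCommGroup M] {f : ι → M} {a : ι} (h : f a = -∑ b ∈ univ.erase a, f b) :
    ∑ b, f b = 0 := by
  rw [← add_sum_erase univ f (mem_univ a), h, neg_add_cancel]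

section ProductMeasure

variable {ι K : Type*} [Fintype ι] (q : ι → K → ℝ)

lemma prod_apply_update [DecidableEq ι] (x : ι → K) (i : ι) (b : K) :
    ∏ j, q j (update x i b j) = q i b * ∏ j ∈ univ.erase i, q j (x j) := by
  rw [← mul_prod_erase univ _ (mem_univ i), update_self]
  congr 1
  exact prod_congr rfl fun j hj => by rw [update_of_ne (ne_of_mem_erase hj)]

lemma sum_mutationFlux_prod_eq_zero [Fintype K] [DecidableEq ι] {A : K → K → ℝ} {i : ι}
    (hstat : ∀ b, ∑ a, q i a * A a b = 0) (hrow : ∀ a, ∑ b, A a b = 0) (x : ι → K) :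
    ∑ b, (A b (x i) * ∏ j, q j (update x i b j) - A (x i) b * ∏ j, q j (x j)) = 0 := by
  set P := ∏ j ∈ univ.erase i, q j (x j)
  have hx : ∏ j, q j (x j) = q i (x i) * P := (mul_prod_erase univ _ (mem_univ i)).symm
  calc ∑ b, (A b (x i) * ∏ j, q j (update x i b j) - A (x i) b * ∏ j, q j (x j))
      = (∑ b, q i b * A b (x i)) * P - (∑ b, A (x i) b) * (q i (x i) * P) := by
        simp only [prod_apply_update, hx, sum_sub_distrib, sum_mul]
        congr 1
        exact sum_congr rfl fun b _ => by ring
    _ = 0 := by rw [hstat, hrow]; ring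

end ProductMeasure

section Substrings

variable {K : Type*} {n : ℕ} (q : Fin n → K → ℝ)

lemma substGenome_subword (I : Finset (Fin n)) (x : Fin n → K) :
    substGenome I x (subword I x) = x := by
  ext j
  simp [substGenome, subword]

lemma prod_substGenome (I : Finset (Fin n)) (x : Fin n → K) (a : ↥I → K) :
    ∏ j, q j (substGenome I x a j) = (∏ i : ↥I, q i (a i)) * ∏ j ∈ Iᶜ, q j (x j) := by
  rw [← prod_mul_prod_compl I, ← prod_coe_sort I]
  congr 1
  · exact prod_congr rfl fun i _ => by simp [substGenome]
  · exact prod_congr rfl fun j hj => by simp [substGenome, mem_compl.mp hj]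

lemma prod_eq_prod_subword_mul_prod_compl (I : Finset (Fin n)) (x : Fin n → K) :
    ∏ j, q j (x j) = (∏ i : ↥I, q i (subword I x i)) * ∏ j ∈ Iᶜ, q j (x j) := by
  conv_lhs => rw [← substGenome_subword I x]
  exact prod_substGenome q I x (subword I x)

lemma marginal_prod [Fintype K] [DecidableEq K] (hq_sum : ∀ i, ∑ a, q i a = 1)
    (I : Finset (Fin n)) (a : ↥I → K) :
    marginal (fun z => ∏ i, q i (z i)) I a = ∏ i : ↥I, q i (a i) := by
  -- `1[x_I = a] · q_Λ(x)` factors over the sites, so the sum over genomes is a product of sums.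
  let f : (j : Fin n) → K → ℝ := fun j k =>
    if h : j ∈ I then (if k = a ⟨j, h⟩ then q j k else 0) else q j k
  have hterm : ∀ x : Fin n → K,
      (if subword I x = a then ∏ j, q j (x j) else 0) = ∏ j, f j (x j) := by
    intro x
    split_ifs with hx
    · subst hx
      exact prod_congr rfl fun j _ => by by_cases hj : j ∈ I <;> simp [f, hj, subword]
    · obtain ⟨i, hi⟩ : ∃ i : ↥I, x i ≠ a i := by
        by_contra! h
        exact hx (funext h)
      exact (prod_eq_zero (mem_univ i.1) (by simp [f, hi])).symm
  have hfactor : ∀ j, ∑ k, f j k = if h : j ∈ I then q j (a ⟨j, h⟩) else 1 := by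
    intro j
    by_cases hj : j ∈ I <;> simp [f, hj, hq_sum]
  rw [marginal]
  simp only [hterm, ← Fintype.prod_sum, hfactor]
  exact (prod_attach_eq_prod_dite I fun i => q i (a i)).symm

lemma recombinationFlux_prod_eq_zero [Fintype K] [DecidableEq K] (hq_sum : ∀ i, ∑ a, q i a = 1)
    {I : Finset (Fin n)} {φ : (↥I → K) → (↥I → K) → ℝ} (hφ_symm : ∀ a b, φ a b = φ b a)
    (x : Fin n → K) (a : ↥I → K) :
    φ a (subword I x) * marginal (fun z => ∏ i, q i (z i)) I (subword I x)
        * ∏ j, q j (substGenome I x a j)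
      - φ (subword I x) a * marginal (fun z => ∏ i, q i (z i)) I a * ∏ j, q j (x j) = 0 := by
  rw [marginal_prod q hq_sum, marginal_prod q hq_sum, prod_substGenome,
    prod_eq_prod_subword_mul_prod_compl q I x, hφ_symm]
  ring

end Substrings

theorem product_distribution_is_fixed_point_general
    {K : Type*} [Fintype K] [DecidableEq K] {n : ℕ}
    (α : Fin n → K → K → ℝ)
    (hα_diag : ∀ i : Fin n, ∀ a : K, α i a a = -∑ b ∈ Finset.univ.erase a, α i a b)
    (q : Fin n → K → ℝ)
    (hq_sum : ∀ i, ∑ a, q i a = 1)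
    (hq_stat : ∀ i : Fin n, ∀ b : K, ∑ a, q i a * α i a b = 0)
    (κ : ℝ)
    (φ : (I : Finset (Fin n)) → (↥I → K) → (↥I → K) → ℝ)
    (hφ_symm : ∀ I a b, φ I a b = φ I b a) :
    ∀ x : Fin n → K, mutRecRHS α κ φ (fun z => ∏ i, q i (z i)) x = 0 := by
  intro x
  have hrow : ∀ i a, ∑ b, α i a b = 0 := fun i a =>
    sum_eq_zero_of_apply_eq_neg_sum_erase (hα_diag i a)
  rw [mutRecRHS,
    sum_eq_zero fun i _ => sum_mutationFlux_prod_eq_zero q (hq_stat i) (hrow i) x,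
    sum_eq_zero fun I _ => sum_eq_zero fun a _ =>
      recombinationFlux_prod_eq_zero q hq_sum (hφ_symm I) x a]
  simp

/-- the product distribution `q_Λ(x) = ∏_i q_i(x_i)` is a fixed point of the
mutation–recombination equation. -/
theorem product_distribution_is_fixed_point
    {K : Type*} [Fintype K] [DecidableEq K] {n : ℕ}
    (α : Fin n → K → K → ℝ)
    (hα_off : ∀ i : Fin n, ∀ a b : K, a ≠ b → 0 ≤ α i a b)
    (hα_diag : ∀ i : Fin n, ∀ a : K, α i a a = -∑ b ∈ Finset.univ.erase a, α i a b)
    (q : Fin n → K → ℝ)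
    (hq_pos : ∀ i a, 0 < q i a)
    (hq_sum : ∀ i, ∑ a, q i a = 1)
    (hq_stat : ∀ i : Fin n, ∀ b : K, ∑ a, q i a * α i a b = 0)
    (κ : ℝ) (hκ : 0 ≤ κ)
    (φ : (I : Finset (Fin n)) → (↥I → K) → (↥I → K) → ℝ)
    (hφ_symm : ∀ I a b, φ I a b = φ I b a)
    (hφ_nonneg : ∀ I a b, 0 ≤ φ I a b) :
    ∀ x : Fin n → K, mutRecRHS α κ φ (fun z => ∏ i, q i (z i)) x = 0 :=
  product_distribution_is_fixed_point_general α hα_diag q hq_sum hq_stat κ φ hφ_symm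
end

section
/- Fix a finite alphabet K, genome length n, X = (Fin n → K); for each i ∈ Fin n let A_i = (α_i(a,b)) be a connected infinitesimal matrix on K (irreducible) with strictly positive stationary distribution q_i; fix κ ≥ 0 and for each I ⊆ Fin n a symmetric nonnegative similarity function φ on pairs of I-substrings. Let μ : [0,∞) → (X → ℝ) be a differentiable family of probability measures solving the mutation–recombination equation dμ(x)/dt = ∑_i ∑_{y_i} ( α_i(y_i,x_i)·μ(x_{Λ∖i}, y_i) − α_i(x_i,y_i)·μ(x) ) + κ·∑_{I⊆Λ} ∑_{y_I} ( φ(y_I,x_I)·μ_I(x_I)·μ(x_{Λ∖I}, y_I) − φ(x_I,y_I)·μ_I(y_I)·μ(x) ). Then μ(t) converges to q_Λ as t → ∞, where q_Λ(x) = ∏_i q_i(x_i): for every x ∈ X, μ(t)(x) → q_Λ(x). -/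
/-!
The relative entropy `V(ν) = ∑ ν log (ν / q_Λ)` is a Lyapunov function. Pairing the right-hand
side with `log (μ / q_Λ)`, the mutation part equals, because `q_Λ` is stationary for every
`A_i`, `-G(μ)` for an entropy production `G ≥ 0`, and `G(μ) = 0` forces `μ / q_Λ` to be constant
along positive mutation steps, hence `μ = q_Λ` by connectivity. The recombination part is
`≤ 0`: symmetrizing in the two parents and using `q_Λ(u') q_Λ(v') = q_Λ(u) q_Λ(v)` for the
recombinants `u', v'`, it is bounded by `log z ≤ z - 1` by a sum that the crossover involution
makes vanish.

Since every genome is reached from every other through positive mutation steps, and mass can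
decay at most exponentially, there is `δ > 0` with `μ_t(x) ≥ δ` for `t ≥ 1`. On the compact set
`{ν ∈ simplex | ν ≥ δ}` both `V` and `G` are continuous, so a LaSalle-type argument gives
`V(μ_t) → 0`, and `V` vanishes there only at `q_Λ`.
-/

open Finset Function Filter Topology Set Real Relation InformationTheory

noncomputable section

namespace MutRec

lemma monotoneOn_Ici_of_hasDerivWithinAt {f f' : ℝ → ℝ} {a : ℝ}
    (hf : ∀ t, a ≤ t → HasDerivWithinAt f (f' t) (Ici a) t) (hf' : ∀ t, a < t → 0 ≤ f' t) :
    MonotoneOn f (Ici a) := by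
  refine monotoneOn_of_hasDerivWithinAt_nonneg (f' := f') (convex_Ici a)
    (fun t ht => (hf t ht).continuousWithinAt)
    (fun t ht => by rw [interior_Ici] at ht ⊢; exact (hf t ht.le).mono Ioi_subset_Ici_self)
    (fun t ht => by rw [interior_Ici] at ht; exact hf' t ht)

lemma antitoneOn_Ici_of_hasDerivWithinAt {f f' : ℝ → ℝ} {a : ℝ}
    (hf : ∀ t, a ≤ t → HasDerivWithinAt f (f' t) (Ici a) t) (hf' : ∀ t, a < t → f' t ≤ 0) :
    AntitoneOn f (Ici a) := by
  refine antitoneOn_of_hasDerivWithinAt_nonpos (f' := f') (convex_Ici a)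
    (fun t ht => (hf t ht).continuousWithinAt)
    (fun t ht => by rw [interior_Ici] at ht ⊢; exact (hf t ht.le).mono Ioi_subset_Ici_self)
    (fun t ht => by rw [interior_Ici] at ht; exact hf' t ht)

lemma exp_mul_add_le_of_hasDerivWithinAt {f f' : ℝ → ℝ} {C L s t : ℝ} (hst : s ≤ t)
    (hf : ∀ τ, s ≤ τ → HasDerivWithinAt f (f' τ) (Ici s) τ)
    (hf' : ∀ τ, s < τ → -C * f τ + L * exp (-C * (τ - s)) ≤ f' τ) :
    exp (-C * (t - s)) * (f s + L * (t - s)) ≤ f t := by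
  have hmono : MonotoneOn (fun τ => exp (C * (τ - s)) * f τ - L * (τ - s)) (Ici s) := by
    refine monotoneOn_Ici_of_hasDerivWithinAt
      (f' := fun τ => exp (C * (τ - s)) * C * f τ + exp (C * (τ - s)) * f' τ - L)
      (fun τ hτ => ?_) (fun τ hτ => ?_)
    · have hexp : HasDerivAt (fun τ => exp (C * (τ - s))) (exp (C * (τ - s)) * C) τ := by
        simpa using (((hasDerivAt_id τ).sub_const s).const_mul C).exp
      exact (hexp.hasDerivWithinAt.mul (hf τ hτ)).sub
        (by simpa using ((hasDerivWithinAt_id τ (Ici s)).sub_const s).const_mul L)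
    · have h := mul_le_mul_of_nonneg_left (hf' τ hτ) (exp_pos (C * (τ - s))).le
      have hL : exp (C * (τ - s)) * (L * exp (-C * (τ - s))) = L := by
        rw [mul_left_comm, ← exp_add, show C * (τ - s) + -C * (τ - s) = 0 by ring, exp_zero,
          mul_one]
      rw [mul_add, hL] at h
      linarith
  have h := hmono self_mem_Ici hst hst
  simp only [sub_self, mul_zero, exp_zero, one_mul, sub_zero] at h
  calc exp (-C * (t - s)) * (f s + L * (t - s))
      ≤ exp (-C * (t - s)) * (exp (C * (t - s)) * f t) :=
        mul_le_mul_of_nonneg_left (by linarith) (exp_pos _).le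
    _ = f t := by rw [← mul_assoc, ← exp_add, neg_mul, neg_add_cancel, exp_zero, one_mul]

section Lyapunov

variable {E : Type*} [TopologicalSpace E] {S : Set E} {V G : E → ℝ}

theorem tendsto_zero_of_hasDerivWithinAt_le_neg (hS : IsCompact S) (hV : Continuous V)
    (hG : ContinuousOn G S) (hV₀ : ∀ ν ∈ S, 0 ≤ V ν) (hG₀ : ∀ ν ∈ S, 0 ≤ G ν)
    (hGV : ∀ ν ∈ S, G ν = 0 → V ν = 0) {γ : ℝ → E} {v' : ℝ → ℝ} {a : ℝ}
    (hγ : ∀ t, a ≤ t → γ t ∈ S)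
    (hV' : ∀ t, a ≤ t → HasDerivWithinAt (fun τ => V (γ τ)) (v' t) (Ici a) t)
    (hv' : ∀ t, a ≤ t → v' t ≤ -G (γ t)) :
    Tendsto (fun t => V (γ t)) atTop (𝓝 0) := by
  have hdescent : ∀ m, (∀ t, a ≤ t → m ≤ G (γ t)) →
      AntitoneOn (fun t => V (γ t) + m * t) (Ici a) := fun m hm =>
    antitoneOn_Ici_of_hasDerivWithinAt
      (fun t ht => (hV' t ht).add (by simpa using (hasDerivWithinAt_id t (Ici a)).const_mul m))
      fun t ht => by linarith [hv' t ht.le, hm t ht.le]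
  refine tendsto_order.2 ⟨fun b hb => eventually_atTop.2 ⟨a, fun t ht =>
    hb.trans_le (hV₀ _ (hγ t ht))⟩, fun ε hε => ?_⟩
  by_contra hnot
  have hge : ∀ t, a ≤ t → ε ≤ V (γ t) := fun t ht => le_of_not_gt fun hlt =>
    hnot (eventually_atTop.2 ⟨t, fun τ hτ => lt_of_le_of_lt (by
      simpa using hdescent 0 (fun τ hτ => hG₀ _ (hγ τ hτ)) ht (ht.trans hτ) hτ) hlt⟩)
  -- Then `G ≥ G ν₀ > 0` along the trajectory, where `ν₀` minimizes `G` on the compact set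
  -- `S ∩ {V ≥ ε}`, and `V` would decrease linearly below `0`.
  obtain ⟨ν₀, ⟨hν₀S, hν₀ε⟩, hmin⟩ := (hS.inter_right (isClosed_Ici.preimage hV)).exists_isMinOn
    ⟨γ a, hγ a le_rfl, hge a le_rfl⟩ (hG.mono inter_subset_left)
  have hm : 0 < G ν₀ := (hG₀ ν₀ hν₀S).lt_of_ne' fun h => by
    have : ε ≤ V ν₀ := hν₀ε
    linarith [hGV ν₀ hν₀S h]
  set t := a + V (γ a) / G ν₀ + 1
  have hta : a ≤ t := by have := div_nonneg (hV₀ _ (hγ a le_rfl)) hm.le; linarith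
  have hlin := hdescent (G ν₀) (fun t ht => hmin ⟨hγ t ht, hge t ht⟩) self_mem_Ici hta hta
  have hmt : G ν₀ * t = G ν₀ * a + V (γ a) + G ν₀ := by
    simp only [t]; field_simp
  have := hV₀ _ (hγ t hta)
  simp only at hlin
  linarith

theorem tendsto_of_tendsto_comp_zero {ι : Type*} {l : Filter ι} (hS : IsCompact S)
    (hV : Continuous V) {p : E} (hp : ∀ ν ∈ S, V ν = 0 → ν = p) {γ : ι → E}
    (hγ : ∀ᶠ t in l, γ t ∈ S)
    (hVγ : Tendsto (fun t => V (γ t)) l (𝓝 0)) : Tendsto γ l (𝓝 p) :=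
  hS.tendsto_nhds_of_unique_mapClusterPt hγ fun ν hν hcl =>
    hp ν hν (eq_of_nhds_neBot ((hcl.continuousAt_comp hV.continuousAt).clusterPt.mono hVγ))

end Lyapunov

def logGap (z : ℝ) : ℝ := z - 1 - log z

lemma logGap_nonneg {z : ℝ} (hz : 0 < z) : 0 ≤ logGap z := by
  linarith [log_le_sub_one_of_pos hz, show logGap z = z - 1 - log z from rfl]

lemma logGap_eq_zero_iff {z : ℝ} (hz : 0 < z) : logGap z = 0 ↔ z = 1 := by
  refine ⟨fun h => by_contra fun hz1 => ?_, fun h => by simp [logGap, h]⟩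
  linarith [log_lt_sub_one_of_pos hz hz1, show logGap z = z - 1 - log z from rfl]

lemma mul_log_div_le_sub {x y : ℝ} (hx : 0 < x) (hy : 0 < y) : x * log (y / x) ≤ y - x := by
  have := mul_le_mul_of_nonneg_left (log_le_sub_one_of_pos (div_pos hy hx)) hx.le
  rwa [mul_sub, mul_div_cancel₀ _ hx.ne', mul_one] at this

section Entropy

variable {X : Type*} [Fintype X]

-- Equal to `∑ ν log (ν / p) + ∑ p - ∑ ν`, i.e. to the relative entropy when `∑ ν = ∑ p`;
-- in this form it is continuous and nonnegative on all of `ν ≥ 0`.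
def relEntropy (p ν : X → ℝ) : ℝ := ∑ x, p x * klFun (ν x / p x)

lemma continuous_relEntropy (p : X → ℝ) : Continuous (relEntropy p) := by
  unfold relEntropy; fun_prop

lemma relEntropy_nonneg {p ν : X → ℝ} (hp : ∀ x, 0 < p x) (hν : ∀ x, 0 ≤ ν x) :
    0 ≤ relEntropy p ν :=
  sum_nonneg fun x _ => mul_nonneg (hp x).le (klFun_nonneg (div_nonneg (hν x) (hp x).le))

lemma eq_of_relEntropy_eq_zero {p ν : X → ℝ} (hp : ∀ x, 0 < p x) (hν : ∀ x, 0 ≤ ν x)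
    (h : relEntropy p ν = 0) : ν = p := by
  funext x
  have hx := (sum_eq_zero_iff_of_nonneg fun x _ => mul_nonneg (hp x).le
    (klFun_nonneg (div_nonneg (hν x) (hp x).le))).1 h x (mem_univ x)
  rw [mul_eq_zero, or_iff_right (hp x).ne', klFun_eq_zero_iff (div_nonneg (hν x) (hp x).le),
    div_eq_one_iff_eq (hp x).ne'] at hx
  exact hx

lemma relEntropy_self {p : X → ℝ} (hp : ∀ x, p x ≠ 0) : relEntropy p p = 0 := by
  simp [relEntropy, div_self (hp _), klFun_one]

lemma hasDerivWithinAt_relEntropy {p : X → ℝ} (hp : ∀ x, p x ≠ 0) {γ : ℝ → X → ℝ}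
    {γ' : X → ℝ} {s : Set ℝ} {t : ℝ} (hγ : ∀ x, HasDerivWithinAt (fun τ => γ τ x) (γ' x) s t)
    (hγt : ∀ x, γ t x ≠ 0) :
    HasDerivWithinAt (fun τ => relEntropy p (γ τ)) (∑ x, γ' x * log (γ t x / p x)) s t := by
  refine HasDerivWithinAt.fun_sum fun x _ => ?_
  refine (((hasDerivAt_klFun (div_ne_zero (hγt x) (hp x))).comp_hasDerivWithinAt t
    ((hγ x).div_const (p x))).const_mul (p x)).congr_deriv ?_
  field_simp [hp x]

lemma isCompact_stdSimplex_inter (δ : ℝ) :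
    IsCompact (stdSimplex ℝ X ∩ {ν | ∀ x, δ ≤ ν x}) :=
  (isCompact_stdSimplex ℝ X).inter_right
    (by simpa only [ofPred_forall] using
      isClosed_iInter fun x : X => isClosed_le continuous_const (continuous_apply x))

end Entropy

lemma reflTransGen_of_forall_update {ι β : Type*} [Fintype ι] [DecidableEq ι]
    {r : (ι → β) → (ι → β) → Prop} (h : ∀ y i b, ReflTransGen r y (update y i b))
    (y x : ι → β) : ReflTransGen r y x := by
  suffices ∀ s : Finset ι, ReflTransGen r y (fun j => if j ∈ s then x j else y j) by
    simpa using this univ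
  intro s
  induction s using Finset.induction_on with
  | empty => simpa using ReflTransGen.refl
  | insert i s hi ih =>
    convert ih.trans (h _ i (x i)) using 1
    ext j
    by_cases hj : j = i <;> simp [hj]

variable {K : Type*} {n : ℕ}

@[simp] lemma subword_substGenome (I : Finset (Fin n)) (x : Fin n → K) (a : ↥I → K) :
    subword I (substGenome I x a) = a := by
  funext j
  simp [subword, substGenome, j.2]

@[simp] lemma substGenome_subword (I : Finset (Fin n)) (x : Fin n → K) :
    substGenome I x (subword I x) = x := by
  funext j
  by_cases h : j ∈ I <;> simp [subword, substGenome, h]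

@[simp] lemma substGenome_substGenome (I : Finset (Fin n)) (x : Fin n → K) (a b : ↥I → K) :
    substGenome I (substGenome I x a) b = substGenome I x b := by
  funext j
  by_cases h : j ∈ I <;> simp [substGenome, h]

def siteSwap (i : Fin n) : (Fin n → K) × K ≃ (Fin n → K) × K where
  toFun p := (update p.1 i p.2, p.1 i)
  invFun p := (update p.1 i p.2, p.1 i)
  left_inv p := by simp
  right_inv p := by simp

def blockSwap (I : Finset (Fin n)) : (Fin n → K) × (↥I → K) ≃ (Fin n → K) × (↥I → K) where
  toFun p := (substGenome I p.1 p.2, subword I p.1)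
  invFun p := (substGenome I p.1 p.2, subword I p.1)
  left_inv p := by simp
  right_inv p := by simp

def crossover (I : Finset (Fin n)) : (Fin n → K) × (Fin n → K) ≃ (Fin n → K) × (Fin n → K) where
  toFun p := (substGenome I p.1 (subword I p.2), substGenome I p.2 (subword I p.1))
  invFun p := (substGenome I p.1 (subword I p.2), substGenome I p.2 (subword I p.1))
  left_inv p := by simp
  right_inv p := by simp

def MutStep (α : Fin n → K → K → ℝ) (y x : Fin n → K) : Prop :=
  ∃ i c, c ≠ y i ∧ 0 < α i (y i) c ∧ x = update y i c

variable {α : Fin n → K → K → ℝ} {φ : (I : Finset (Fin n)) → (↥I → K) → (↥I → K) → ℝ}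

lemma reflTransGen_mutStep
    (hα_conn : ∀ i a b, ReflTransGen (fun u v => 0 < α i u v) a b) (y x : Fin n → K) :
    ReflTransGen (MutStep α) y x := by
  refine reflTransGen_of_forall_update (fun y i b => ?_) y x
  have := ReflTransGen.lift' (p := MutStep α) (update y i) (fun u v huv => ?_) _ _
    (hα_conn i (y i) b)
  · simpa [onFun] using this
  by_cases h : v = u
  · subst h; exact .refl
  · exact .single ⟨i, v, by simpa using h, by simpa using huv, by simp⟩

def prodDist (q : Fin n → K → ℝ) (x : Fin n → K) : ℝ := ∏ i, q i (x i)

variable {q : Fin n → K → ℝ}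

lemma prodDist_pos (hq_pos : ∀ i a, 0 < q i a) (x : Fin n → K) : 0 < prodDist q x :=
  prod_pos fun i _ => hq_pos i (x i)

lemma prodDist_update (x : Fin n → K) (i : Fin n) (b : K) :
    prodDist q (update x i b) = q i b * ∏ j ∈ univ.erase i, q j (x j) := by
  rw [prodDist, ← mul_prod_erase univ _ (mem_univ i), update_self]
  exact congrArg _ (prod_congr rfl fun j hj => by rw [update_of_ne (ne_of_mem_erase hj)])

lemma prodDist_crossover (I : Finset (Fin n)) (u v : Fin n → K) :
    prodDist q (substGenome I u (subword I v)) * prodDist q (substGenome I v (subword I u))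
      = prodDist q u * prodDist q v := by
  simp only [prodDist, ← prod_mul_distrib]
  refine prod_congr rfl fun j _ => ?_
  by_cases h : j ∈ I <;> simp [substGenome, subword, h, mul_comm]

lemma mutEntropyProd_term_nonneg (hα_off : ∀ i a b, a ≠ b → 0 ≤ α i a b)
    {p ν : (Fin n → K) → ℝ} (hp : ∀ x, 0 < p x) (hν : ∀ x, 0 < ν x) (i : Fin n)
    (y : Fin n → K) (a : K) :
    0 ≤ α i (y i) a * ν y * logGap (ν (update y i a) / p (update y i a) / (ν y / p y)) := by
  by_cases ha : a = y i
  · simp [ha, div_self (div_pos (hν y) (hp y)).ne', logGap]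
  · exact mul_nonneg (mul_nonneg (hα_off i _ _ (Ne.symm ha)) (hν y).le)
      (logGap_nonneg (div_pos (div_pos (hν _) (hp _)) (div_pos (hν y) (hp y))))

variable [Fintype K]

def mutation (α : Fin n → K → K → ℝ) (ν : (Fin n → K) → ℝ) (x : Fin n → K) : ℝ :=
  ∑ i, ∑ b, (α i b (x i) * ν (update x i b) - α i (x i) b * ν x)

lemma sum_mutation_mul (hrow : ∀ i a, ∑ b, α i a b = 0) (ν g : (Fin n → K) → ℝ) :
    ∑ x, mutation α ν x * g x
      = ∑ i, ∑ y, ∑ a, α i (y i) a * ν y * (g (update y i a) - g y) := by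
  have gain : ∑ x, ∑ i, ∑ b, α i b (x i) * ν (update x i b) * g x
      = ∑ i, ∑ y, ∑ a, α i (y i) a * ν y * g (update y i a) := by
    rw [sum_comm]
    refine sum_congr rfl fun i _ => ?_
    simp_rw [← Fintype.sum_prod_type']
    exact Fintype.sum_equiv (siteSwap i) _ _ fun p => by simp [siteSwap]
  have loss : ∀ i, ∑ y, ∑ a, α i (y i) a * ν y * g y = 0 := fun i =>
    sum_eq_zero fun y _ => by rw [← sum_mul, ← sum_mul, hrow, zero_mul, zero_mul]
  simp only [mutation, sum_mul, sub_mul, mul_sub, sum_sub_distrib]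
  rw [gain, sum_comm (s := univ (α := Fin n → K)), sum_eq_zero fun i _ => loss i]

def mutEntropyProd (α : Fin n → K → K → ℝ) (p ν : (Fin n → K) → ℝ) : ℝ :=
  ∑ i, ∑ y, ∑ a, α i (y i) a * ν y * logGap (ν (update y i a) / p (update y i a) / (ν y / p y))

lemma sum_mutation_mul_log_div (hrow : ∀ i a, ∑ b, α i a b = 0) {p ν : (Fin n → K) → ℝ}
    (hp_stat : ∀ x, mutation α p x = 0) (hp : ∀ x, 0 < p x) (hν : ∀ x, 0 < ν x) :
    ∑ x, mutation α ν x * log (ν x / p x) = -mutEntropyProd α p ν := by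
  -- With `ρ = ν / p`, `ν y * log (ρ y' / ρ y) = p y * (ρ y' - ρ y) - ν y * logGap (ρ y' / ρ y)`,
  -- and the linear part is the pairing of `mutation α p = 0` with `ρ`.
  have hρ : ∑ x, mutation α p x * (ν x / p x) = 0 := by simp [hp_stat]
  rw [sum_mutation_mul hrow] at hρ ⊢
  rw [mutEntropyProd, ← zero_sub, ← hρ]
  simp only [← sum_sub_distrib]
  refine sum_congr rfl fun i _ => sum_congr rfl fun y _ => sum_congr rfl fun a _ => ?_
  have hr : ν y / p y ≠ 0 := (div_pos (hν y) (hp y)).ne'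
  have hr' : ν (update y i a) / p (update y i a) ≠ 0 := (div_pos (hν _) (hp _)).ne'
  have hνy : ν y = p y * (ν y / p y) := by field_simp [(hp y).ne']
  rw [logGap, log_div hr' hr]
  generalize ν (update y i a) / p (update y i a) = r' at hr' ⊢
  generalize ν y / p y = r at hr hνy ⊢
  rw [hνy]
  field_simp
  ring

lemma mutEntropyProd_nonneg (hα_off : ∀ i a b, a ≠ b → 0 ≤ α i a b)
    {p ν : (Fin n → K) → ℝ} (hp : ∀ x, 0 < p x) (hν : ∀ x, 0 < ν x) :
    0 ≤ mutEntropyProd α p ν :=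
  sum_nonneg fun i _ => sum_nonneg fun y _ => sum_nonneg fun a _ =>
    mutEntropyProd_term_nonneg hα_off hp hν i y a

lemma eq_of_mutEntropyProd_eq_zero (hα_off : ∀ i a b, a ≠ b → 0 ≤ α i a b)
    (hα_conn : ∀ i a b, ReflTransGen (fun u v => 0 < α i u v) a b)
    {p ν : (Fin n → K) → ℝ} (hp : ∀ x, 0 < p x) (hν : ∀ x, 0 < ν x)
    (hsum : ∑ x, ν x = ∑ x, p x) (h : mutEntropyProd α p ν = 0) : ν = p := by
  have hterm : ∀ i y a,
      α i (y i) a * ν y * logGap (ν (update y i a) / p (update y i a) / (ν y / p y)) = 0 := by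
    intro i y a
    have hnn := mutEntropyProd_term_nonneg hα_off hp hν
    have h1 := (sum_eq_zero_iff_of_nonneg fun i _ => sum_nonneg fun y _ =>
      sum_nonneg fun a _ => hnn i y a).1 h i (mem_univ i)
    have h2 := (sum_eq_zero_iff_of_nonneg fun y _ => sum_nonneg fun a _ => hnn i y a).1 h1 y
      (mem_univ y)
    exact (sum_eq_zero_iff_of_nonneg fun a _ => hnn i y a).1 h2 a (mem_univ a)
  have hstep : ∀ y x, MutStep α y x → ν x / p x = ν y / p y := by
    rintro y x ⟨i, c, -, hc, rfl⟩
    have := hterm i y c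
    rw [mul_eq_zero, mul_eq_zero, or_iff_right hc.ne', or_iff_right (hν y).ne',
      logGap_eq_zero_iff (div_pos (div_pos (hν _) (hp _)) (div_pos (hν y) (hp y))),
      div_eq_one_iff_eq (div_pos (hν y) (hp y)).ne'] at this
    exact this
  have hconst : ∀ y x, ν x / p x = ν y / p y := fun y x => by
    induction reflTransGen_mutStep hα_conn y x with
    | refl => rfl
    | tail _ hzx ih => exact (hstep _ _ hzx).trans ih
  funext x
  have hscale : ∑ y, p y = ν x / p x * ∑ y, p y := by
    rw [mul_sum, ← hsum]
    exact sum_congr rfl fun y _ => by rw [hconst y x, div_mul_cancel₀ _ (hp y).ne']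
  have hpos : 0 < ∑ y, p y := sum_pos (fun y _ => hp y) ⟨x, mem_univ x⟩
  rw [eq_comm, mul_eq_right₀ hpos.ne', div_eq_one_iff_eq (hp x).ne'] at hscale
  exact hscale

lemma continuousOn_mutEntropyProd {p : (Fin n → K) → ℝ} (hp : ∀ x, 0 < p x) :
    ContinuousOn (mutEntropyProd α p) {ν | ∀ x, 0 < ν x} := by
  have hratio : ∀ i y a, ∀ ν ∈ {ν : (Fin n → K) → ℝ | ∀ x, 0 < ν x},
      ν (update y i a) / p (update y i a) / (ν y / p y) ≠ 0 := fun i y a ν hν =>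
    (div_pos (div_pos (hν _) (hp _)) (div_pos (hν y) (hp y))).ne'
  have hden : ∀ y, ∀ ν ∈ {ν : (Fin n → K) → ℝ | ∀ x, 0 < ν x}, ν y / p y ≠ 0 := fun y ν hν =>
    (div_pos (hν y) (hp y)).ne'
  unfold mutEntropyProd logGap
  fun_prop (disch := first | exact hratio _ _ _ | exact hden _)

lemma sum_prodDist (hq_sum : ∀ i, ∑ a, q i a = 1) : ∑ x, prodDist q x = 1 := by
  simp [prodDist, ← Fintype.prod_sum, hq_sum]

lemma mutation_prodDist (hrow : ∀ i a, ∑ b, α i a b = 0)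
    (hq_stat : ∀ i b, ∑ a, q i a * α i a b = 0) (x : Fin n → K) :
    mutation α (prodDist q) x = 0 := by
  refine sum_eq_zero fun i _ => ?_
  have gain : ∑ b, α i b (x i) * prodDist q (update x i b) = 0 := by
    simp only [prodDist_update, ← mul_assoc, mul_comm (α i _ _) (q i _)]
    rw [← sum_mul, hq_stat, zero_mul]
  have loss : ∑ b, α i (x i) b * prodDist q x = 0 := by rw [← sum_mul, hrow, zero_mul]
  rw [sum_sub_distrib, gain, loss, sub_zero]

lemma sum_crossover_eq (hφ_symm : ∀ I a b, φ I a b = φ I b a) (ν : (Fin n → K) → ℝ)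
    (I : Finset (Fin n)) :
    ∑ u, ∑ v, φ I (subword I u) (subword I v)
      * (ν (substGenome I u (subword I v)) * ν (substGenome I v (subword I u)))
      = ∑ u, ∑ v, φ I (subword I u) (subword I v) * (ν u * ν v) := by
  simp_rw [← Fintype.sum_prod_type']
  exact Fintype.sum_equiv (crossover I) _ _ fun p => by simp [crossover, hφ_symm I (subword I p.2)]

def rateBound (α : Fin n → K → K → ℝ) (κ : ℝ)
    (φ : (I : Finset (Fin n)) → (↥I → K) → (↥I → K) → ℝ) : ℝ :=
  ∑ i, ∑ a, |α i a a| + κ * ∑ I, ∑ a, ∑ b, φ I a b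

variable [DecidableEq K]

def mutationInflow (α : Fin n → K → K → ℝ) (ν : (Fin n → K) → ℝ) (x : Fin n → K) : ℝ :=
  ∑ i, ∑ b ∈ univ.erase (x i), α i b (x i) * ν (update x i b)

lemma mutationInflow_nonneg (hα_off : ∀ i a b, a ≠ b → 0 ≤ α i a b) {ν : (Fin n → K) → ℝ}
    (hν : ∀ x, 0 ≤ ν x) (x : Fin n → K) : 0 ≤ mutationInflow α ν x :=
  sum_nonneg fun i _ => sum_nonneg fun b hb =>
    mul_nonneg (hα_off i b (x i) (ne_of_mem_erase hb)) (hν _)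

lemma mul_le_mutationInflow (hα_off : ∀ i a b, a ≠ b → 0 ≤ α i a b) {ν : (Fin n → K) → ℝ}
    (hν : ∀ x, 0 ≤ ν x) {y : Fin n → K} {i : Fin n} {c : K} (hc : c ≠ y i) :
    α i (y i) c * ν y ≤ mutationInflow α ν (update y i c) := by
  set x := update y i c
  have hsite : ∀ j, 0 ≤ ∑ b ∈ univ.erase (x j), α j b (x j) * ν (update x j b) := fun j =>
    sum_nonneg fun b hb => mul_nonneg (hα_off j b (x j) (ne_of_mem_erase hb)) (hν _)
  calc α i (y i) c * ν y = α i (y i) (x i) * ν (update x i (y i)) := by simp [x]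
    _ ≤ ∑ b ∈ univ.erase (x i), α i b (x i) * ν (update x i b) :=
        single_le_sum (f := fun b => α i b (x i) * ν (update x i b))
          (fun b hb => mul_nonneg (hα_off i b (x i) (ne_of_mem_erase hb)) (hν _))
          (mem_erase.2 ⟨by simpa [x] using hc.symm, mem_univ _⟩)
    _ ≤ mutationInflow α ν x :=
        single_le_sum (f := fun j => ∑ b ∈ univ.erase (x j), α j b (x j) * ν (update x j b))
          (fun j _ => hsite j) (mem_univ i)

lemma neg_mul_add_le_mutation (hrow : ∀ i a, ∑ b, α i a b = 0) {ν : (Fin n → K) → ℝ}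
    (hν : ∀ x, 0 ≤ ν x) (x : Fin n → K) :
    -(∑ i, ∑ a, |α i a a|) * ν x + mutationInflow α ν x ≤ mutation α ν x := by
  unfold mutationInflow
  rw [← sum_neg_distrib, sum_mul, ← sum_add_distrib]
  refine sum_le_sum fun i _ => ?_
  have hdiag : -(∑ a, |α i a a|) * ν x ≤ α i (x i) (x i) * ν x :=
    mul_le_mul_of_nonneg_right ((neg_le_neg (single_le_sum (fun a _ => abs_nonneg (α i a a))
      (mem_univ (x i)))).trans (neg_abs_le _)) (hν x)
  rw [sum_sub_distrib, ← sum_mul, hrow, zero_mul, sub_zero,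
    ← add_sum_erase _ (fun b => α i b (x i) * ν (update x i b)) (mem_univ (x i)), update_eq_self]
  exact add_le_add_left hdiag _

lemma sum_sum_ite_subword_eq {M : Type*} [AddCommMonoid M] (I : Finset (Fin n)) (b : ↥I → K)
    (F : (Fin n → K) → (↥I → K) → M) :
    ∑ x, ∑ a, (if b = subword I x then F x a else 0)
      = ∑ u, F (substGenome I u b) (subword I u) := by
  rw [← Fintype.sum_prod_type', ← (blockSwap I).sum_comp, Fintype.sum_prod_type]
  simp [blockSwap]

lemma sum_mul_marginal (ν : (Fin n → K) → ℝ) (I : Finset (Fin n)) (f : (↥I → K) → ℝ) :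
    ∑ a, f a * marginal ν I a = ∑ v, f (subword I v) * ν v := by
  simp only [marginal, mul_sum, mul_ite, mul_zero]
  rw [sum_comm]
  simp

def recombination (φ : (I : Finset (Fin n)) → (↥I → K) → (↥I → K) → ℝ)
    (ν : (Fin n → K) → ℝ) (x : Fin n → K) : ℝ :=
  ∑ I, ∑ a, (φ I a (subword I x) * marginal ν I (subword I x) * ν (substGenome I x a)
      - φ I (subword I x) a * marginal ν I a * ν x)

lemma mutRecRHS_eq (α : Fin n → K → K → ℝ) (κ : ℝ)
    (φ : (I : Finset (Fin n)) → (↥I → K) → (↥I → K) → ℝ) (ν : (Fin n → K) → ℝ) :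
    mutRecRHS α κ φ ν = fun x => mutation α ν x + κ * recombination φ ν x := rfl

lemma sum_recombination_mul (ν g : (Fin n → K) → ℝ) :
    ∑ x, recombination φ ν x * g x = ∑ I, ∑ u, ∑ v,
      φ I (subword I u) (subword I v) * ν u * ν v * (g (substGenome I u (subword I v)) - g u) := by
  have gain : ∀ I, ∑ x, ∑ a,
      φ I a (subword I x) * marginal ν I (subword I x) * ν (substGenome I x a) * g x
      = ∑ u, ∑ v,
        φ I (subword I u) (subword I v) * ν u * ν v * g (substGenome I u (subword I v)) := by
    intro I
    calc _ = ∑ x, ∑ v, ∑ a, if subword I v = subword I x then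
          φ I a (subword I x) * ν v * ν (substGenome I x a) * g x else 0 := by
          simp only [marginal, mul_sum, sum_mul, mul_ite, ite_mul, mul_zero, zero_mul]
          exact sum_congr rfl fun x _ => sum_comm
      _ = ∑ v, ∑ u, φ I (subword I u) (subword I v) * ν v * ν u
            * g (substGenome I u (subword I v)) := by
          rw [sum_comm]
          simp only [sum_sum_ite_subword_eq, subword_substGenome, substGenome_substGenome,
            substGenome_subword]
      _ = _ := by
          rw [sum_comm]
          exact sum_congr rfl fun u _ => sum_congr rfl fun v _ => by ring
  have loss : ∀ I, ∑ x, ∑ a, φ I (subword I x) a * marginal ν I a * ν x * g x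
      = ∑ u, ∑ v, φ I (subword I u) (subword I v) * ν u * ν v * g u := by
    intro I
    refine sum_congr rfl fun u _ => ?_
    simpa [← sum_mul, mul_sum, mul_assoc, mul_comm, mul_left_comm] using
      congrArg (· * (ν u * g u)) (sum_mul_marginal ν I (φ I (subword I u)))
  simp only [recombination, sum_mul, sub_mul, sum_sub_distrib, mul_sub]
  rw [sum_comm, ← sum_congr rfl fun I _ => gain I, sum_comm (s := univ (α := Fin n → K)),
    ← sum_congr rfl fun I _ => loss I]

lemma sum_recombination_mul_log_div_nonpos (hφ_symm : ∀ I a b, φ I a b = φ I b a)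
    (hφ_nonneg : ∀ I a b, 0 ≤ φ I a b) {p ν : (Fin n → K) → ℝ} (hp : ∀ x, 0 < p x)
    (hp_cross : ∀ I u v, p (substGenome I u (subword I v)) * p (substGenome I v (subword I u))
      = p u * p v)
    (hν : ∀ x, 0 < ν x) :
    ∑ x, recombination φ ν x * log (ν x / p x) ≤ 0 := by
  rw [sum_recombination_mul]
  refine sum_nonpos fun I _ => ?_
  set D := ∑ u, ∑ v, φ I (subword I u) (subword I v) * ν u * ν v *
    (log (ν (substGenome I u (subword I v)) / p (substGenome I u (subword I v)))
      - log (ν u / p u))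
  have hswap : D = ∑ u, ∑ v, φ I (subword I u) (subword I v) * ν u * ν v *
      (log (ν (substGenome I v (subword I u)) / p (substGenome I v (subword I u)))
        - log (ν v / p v)) := by
    rw [sum_comm]
    exact sum_congr rfl fun u _ => sum_congr rfl fun v _ => by rw [hφ_symm]; ring
  suffices D + D ≤ 0 by linarith
  -- As `p u' * p v' = p u * p v`, the symmetrized summand is `ν u ν v log (ν u' ν v' / ν u ν v)`.
  calc D + D ≤ ∑ u, ∑ v, φ I (subword I u) (subword I v)
        * (ν (substGenome I u (subword I v)) * ν (substGenome I v (subword I u)) - ν u * ν v) := by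
        nth_rewrite 2 [hswap]
        simp only [D, ← sum_add_distrib]
        refine sum_le_sum fun u _ => sum_le_sum fun v _ => ?_
        set u' := substGenome I u (subword I v)
        set v' := substGenome I v (subword I u)
        have hlog : log (ν u' / p u') - log (ν u / p u) + (log (ν v' / p v') - log (ν v / p v))
            = log (ν u' * ν v' / (ν u * ν v)) := by
          have hplog := congrArg log (hp_cross I u v)
          rw [log_mul (hp _).ne' (hp _).ne', log_mul (hp _).ne' (hp _).ne'] at hplog
          simp only [log_div (hν _).ne' (hp _).ne', log_div (mul_pos (hν _) (hν _)).ne'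
            (mul_pos (hν _) (hν _)).ne', log_mul (hν _).ne' (hν _).ne']
          linarith
        rw [mul_assoc _ (ν u), ← mul_add, mul_assoc, hlog]
        exact mul_le_mul_of_nonneg_left
          (mul_log_div_le_sub (mul_pos (hν u) (hν v)) (mul_pos (hν u') (hν v'))) (hφ_nonneg _ _ _)
    _ = 0 := by simp only [mul_sub, sum_sub_distrib, sum_crossover_eq hφ_symm, sub_self]

lemma sum_mutRecRHS_mul_log_div_le (hrow : ∀ i a, ∑ b, α i a b = 0) {κ : ℝ} (hκ : 0 ≤ κ)
    (hφ_symm : ∀ I a b, φ I a b = φ I b a) (hφ_nonneg : ∀ I a b, 0 ≤ φ I a b)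
    {p ν : (Fin n → K) → ℝ} (hp_stat : ∀ x, mutation α p x = 0) (hp : ∀ x, 0 < p x)
    (hp_cross : ∀ I u v, p (substGenome I u (subword I v)) * p (substGenome I v (subword I u))
      = p u * p v)
    (hν : ∀ x, 0 < ν x) :
    ∑ x, mutRecRHS α κ φ ν x * log (ν x / p x) ≤ -mutEntropyProd α p ν := by
  simp only [mutRecRHS_eq, add_mul, sum_add_distrib, mul_assoc, ← mul_sum]
  rw [sum_mutation_mul_log_div hrow hp_stat hp hν]
  have := mul_nonpos_of_nonneg_of_nonpos hκ
    (sum_recombination_mul_log_div_nonpos hφ_symm hφ_nonneg hp hp_cross hν)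
  linarith

lemma marginal_nonneg {ν : (Fin n → K) → ℝ} (hν : ∀ x, 0 ≤ ν x) (I : Finset (Fin n))
    (a : ↥I → K) : 0 ≤ marginal ν I a :=
  sum_nonneg fun x _ => by split_ifs <;> simp [hν x]

lemma marginal_le_sum {ν : (Fin n → K) → ℝ} (hν : ∀ x, 0 ≤ ν x) (I : Finset (Fin n))
    (a : ↥I → K) : marginal ν I a ≤ ∑ x, ν x :=
  sum_le_sum fun x _ => by split_ifs <;> simp [hν x]

lemma neg_mul_le_recombination (hφ_nonneg : ∀ I a b, 0 ≤ φ I a b) {ν : (Fin n → K) → ℝ}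
    (hν : ∀ x, 0 ≤ ν x) (hν_sum : ∑ x, ν x = 1) (x : Fin n → K) :
    -(∑ I, ∑ a, ∑ b, φ I a b) * ν x ≤ recombination φ ν x := by
  rw [neg_mul, sum_mul, ← sum_neg_distrib]
  refine sum_le_sum fun I _ => ?_
  calc -((∑ a, ∑ b, φ I a b) * ν x) ≤ -∑ a, φ I (subword I x) a * ν x := by
        rw [← sum_mul]
        exact neg_le_neg (mul_le_mul_of_nonneg_right (single_le_sum
          (fun a _ => sum_nonneg fun b _ => hφ_nonneg I a b) (mem_univ (subword I x))) (hν x))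
    _ ≤ _ := by
        rw [← sum_neg_distrib]
        refine sum_le_sum fun a _ => ?_
        have hgain : 0 ≤ φ I a (subword I x) * marginal ν I (subword I x) * ν (substGenome I x a) :=
          mul_nonneg (mul_nonneg (hφ_nonneg _ _ _) (marginal_nonneg hν _ _)) (hν _)
        have hloss : φ I (subword I x) a * marginal ν I a * ν x ≤ φ I (subword I x) a * ν x := by
          have := marginal_le_sum hν I a
          rw [hν_sum] at this
          nlinarith [mul_nonneg (hφ_nonneg I (subword I x) a) (hν x)]
        linarith

lemma neg_rateBound_mul_add_le_mutRecRHS (hrow : ∀ i a, ∑ b, α i a b = 0)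
    (hφ_nonneg : ∀ I a b, 0 ≤ φ I a b) {κ : ℝ} (hκ : 0 ≤ κ) {ν : (Fin n → K) → ℝ}
    (hν : ∀ x, 0 ≤ ν x) (hν_sum : ∑ x, ν x = 1) (x : Fin n → K) :
    -rateBound α κ φ * ν x + mutationInflow α ν x ≤ mutRecRHS α κ φ ν x := by
  have hmut := neg_mul_add_le_mutation hrow hν x
  have hrec := mul_le_mul_of_nonneg_left (neg_mul_le_recombination hφ_nonneg hν hν_sum x) hκ
  rw [mutRecRHS_eq, rateBound]
  linarith

structure IsMutRecSolution (α : Fin n → K → K → ℝ) (κ : ℝ)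
    (φ : (I : Finset (Fin n)) → (↥I → K) → (↥I → K) → ℝ) (μ : ℝ → (Fin n → K) → ℝ) : Prop where
  nonneg : ∀ t, 0 ≤ t → ∀ x, 0 ≤ μ t x
  sum_eq_one : ∀ t, 0 ≤ t → ∑ x, μ t x = 1
  hasDerivWithinAt : ∀ t, 0 ≤ t → ∀ x,
    HasDerivWithinAt (fun s => μ s x) (mutRecRHS α κ φ (μ t) x) (Ici 0) t

namespace IsMutRecSolution

variable {κ : ℝ} {μ : ℝ → (Fin n → K) → ℝ}

lemma hasDerivWithinAt_Ici (hμ : IsMutRecSolution α κ φ μ) {s t : ℝ} (hs : 0 ≤ s) (hst : s ≤ t)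
    (x : Fin n → K) :
    HasDerivWithinAt (fun τ => μ τ x) (mutRecRHS α κ φ (μ t) x) (Ici s) t :=
  (hμ.hasDerivWithinAt t (hs.trans hst) x).mono (Ici_subset_Ici.2 hs)

lemma exp_neg_mul_le (hα_off : ∀ i a b, a ≠ b → 0 ≤ α i a b) (hrow : ∀ i a, ∑ b, α i a b = 0)
    (hφ_nonneg : ∀ I a b, 0 ≤ φ I a b) (hκ : 0 ≤ κ) (hμ : IsMutRecSolution α κ φ μ)
    {s t : ℝ} (hs : 0 ≤ s) (hst : s ≤ t) (x : Fin n → K) :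
    exp (-rateBound α κ φ * (t - s)) * μ s x ≤ μ t x := by
  have := exp_mul_add_le_of_hasDerivWithinAt (C := rateBound α κ φ) (L := 0) hst
    (fun τ hτ => hμ.hasDerivWithinAt_Ici hs hτ x) fun τ hτ => ?_
  · simpa using this
  have hτ0 : 0 ≤ τ := hs.trans hτ.le
  simpa using (le_add_of_nonneg_right (mutationInflow_nonneg hα_off (hμ.nonneg τ hτ0) x)).trans
    (neg_rateBound_mul_add_le_mutRecRHS hrow hφ_nonneg hκ (hμ.nonneg τ hτ0)
      (hμ.sum_eq_one τ hτ0) x)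

lemma mul_exp_neg_mul_le (hα_off : ∀ i a b, a ≠ b → 0 ≤ α i a b)
    (hrow : ∀ i a, ∑ b, α i a b = 0) (hφ_nonneg : ∀ I a b, 0 ≤ φ I a b) (hκ : 0 ≤ κ)
    (hμ : IsMutRecSolution α κ φ μ) {y : Fin n → K} {i : Fin n} {c : K} (hc : c ≠ y i)
    {s h : ℝ} (hs : 0 ≤ s) (hh : 0 ≤ h) :
    α i (y i) c * h * exp (-rateBound α κ φ * h) * μ s y ≤ μ (s + h) (update y i c) := by
  have key := exp_mul_add_le_of_hasDerivWithinAt (C := rateBound α κ φ)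
    (L := α i (y i) c * μ s y) (le_add_of_nonneg_right hh)
    (fun τ hτ => hμ.hasDerivWithinAt_Ici hs hτ (update y i c)) fun τ hτ => ?_
  · rw [add_sub_cancel_left] at key
    have := hμ.nonneg s hs (update y i c)
    nlinarith [exp_pos (-rateBound α κ φ * h)]
  have hτ0 : 0 ≤ τ := hs.trans hτ.le
  have hdecay := mul_le_mul_of_nonneg_left (hμ.exp_neg_mul_le hα_off hrow hφ_nonneg hκ hs hτ.le y)
    (hα_off i _ _ hc.symm)
  have hinflow := mul_le_mutationInflow hα_off (hμ.nonneg τ hτ0) hc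
  have hlow := neg_rateBound_mul_add_le_mutRecRHS hrow hφ_nonneg hκ (hμ.nonneg τ hτ0)
    (hμ.sum_eq_one τ hτ0) (update y i c)
  linarith

lemma exists_pos_mul_le (hα_off : ∀ i a b, a ≠ b → 0 ≤ α i a b)
    (hrow : ∀ i a, ∑ b, α i a b = 0) (hφ_nonneg : ∀ I a b, 0 ≤ φ I a b) (hκ : 0 ≤ κ)
    (hμ : IsMutRecSolution α κ φ μ) {y x : Fin n → K} (hyx : ReflTransGen (MutStep α) y x)
    {T : ℝ} (hT : 0 < T) : ∃ c > 0, ∀ s, 0 ≤ s → c * μ s y ≤ μ (s + T) x := by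
  induction hyx generalizing T with
  | refl =>
    refine ⟨exp (-rateBound α κ φ * T), exp_pos _, fun s hs => ?_⟩
    simpa using hμ.exp_neg_mul_le hα_off hrow hφ_nonneg hκ hs (le_add_of_nonneg_right hT.le) y
  | tail _ hzx ih =>
    obtain ⟨i, c, hc, hα, rfl⟩ := hzx
    obtain ⟨c₁, hc₁, h₁⟩ := ih (half_pos hT)
    refine ⟨α i _ c * (T / 2) * exp (-rateBound α κ φ * (T / 2)) * c₁, by positivity,
      fun s hs => ?_⟩
    have h₂ := hμ.mul_exp_neg_mul_le hα_off hrow hφ_nonneg hκ hc (by positivity : 0 ≤ s + T / 2)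
      (half_pos hT).le
    rw [add_assoc, add_halves] at h₂
    calc _ = α i _ c * (T / 2) * exp (-rateBound α κ φ * (T / 2)) * (c₁ * μ s y) := by ring
      _ ≤ _ := mul_le_mul_of_nonneg_left (h₁ s hs) (by positivity)
      _ ≤ _ := h₂

lemma exists_pos_le (hα_off : ∀ i a b, a ≠ b → 0 ≤ α i a b)
    (hrow : ∀ i a, ∑ b, α i a b = 0)
    (hα_conn : ∀ i a b, ReflTransGen (fun u v => 0 < α i u v) a b)
    (hφ_nonneg : ∀ I a b, 0 ≤ φ I a b) (hκ : 0 ≤ κ) (hμ : IsMutRecSolution α κ φ μ) :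
    ∃ δ > 0, ∀ t, 1 ≤ t → ∀ x, δ ≤ μ t x := by
  -- Mass at time `t - 1` is at least `1 / |X|` somewhere, and it reaches every genome by time `t`.
  rcases isEmpty_or_nonempty (Fin n → K) with hX | hX
  · exact ⟨1, one_pos, fun t _ x => isEmptyElim x⟩
  choose c hc₀ hc using fun p : (Fin n → K) × (Fin n → K) =>
    hμ.exists_pos_mul_le hα_off hrow hφ_nonneg hκ (reflTransGen_mutStep hα_conn p.1 p.2) one_pos
  obtain ⟨p₀, hp₀⟩ := Finite.exists_min c
  have hcard : (0 : ℝ) < Fintype.card (Fin n → K) := Nat.cast_pos.2 Fintype.card_pos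
  refine ⟨c p₀ / Fintype.card (Fin n → K), div_pos (hc₀ p₀) hcard, fun t ht x => ?_⟩
  have hs : 0 ≤ t - 1 := by linarith
  rw [div_le_iff₀' hcard]
  calc c p₀ = ∑ y, c p₀ * μ (t - 1) y := by rw [← mul_sum, hμ.sum_eq_one _ hs, mul_one]
    _ ≤ ∑ _y : Fin n → K, μ t x := sum_le_sum fun y _ => by
        simpa using (mul_le_mul_of_nonneg_right (hp₀ (y, x)) (hμ.nonneg _ hs y)).trans
          (hc (y, x) (t - 1) hs)
    _ = _ := by simp

end IsMutRecSolution

end MutRec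

end

open MutRec in
/-- every differentiable family of probability measures on `[0,∞)` solving
the mutation–recombination equation converges, as `t → ∞`, to the product distribution
`q_Λ(x) = ∏_i q_i(x_i)`. -/
theorem trajectory_converges_to_product
    {K : Type*} [Fintype K] [DecidableEq K] {n : ℕ}
    (α : Fin n → K → K → ℝ)
    (hα_off : ∀ i : Fin n, ∀ a b : K, a ≠ b → 0 ≤ α i a b)
    (hα_diag : ∀ i : Fin n, ∀ a : K, α i a a = -∑ b ∈ Finset.univ.erase a, α i a b)
    (hα_conn : ∀ i : Fin n, ∀ a b : K,
      Relation.ReflTransGen (fun u v => 0 < α i u v) a b)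
    (q : Fin n → K → ℝ)
    (hq_pos : ∀ i a, 0 < q i a)
    (hq_sum : ∀ i, ∑ a, q i a = 1)
    (hq_stat : ∀ i : Fin n, ∀ b : K, ∑ a, q i a * α i a b = 0)
    (κ : ℝ) (hκ : 0 ≤ κ)
    (φ : (I : Finset (Fin n)) → (↥I → K) → (↥I → K) → ℝ)
    (hφ_symm : ∀ I a b, φ I a b = φ I b a)
    (hφ_nonneg : ∀ I a b, 0 ≤ φ I a b)
    (μ : ℝ → (Fin n → K) → ℝ)
    (hμ_nonneg : ∀ t, 0 ≤ t → ∀ x, 0 ≤ μ t x)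
    (hμ_sum : ∀ t, 0 ≤ t → ∑ x, μ t x = 1)
    (hμ_ode : ∀ t, 0 ≤ t → ∀ x,
      HasDerivWithinAt (fun s => μ s x) (mutRecRHS α κ φ (μ t) x) (Set.Ici 0) t) :
    ∀ x : Fin n → K,
      Filter.Tendsto (fun t => μ t x) Filter.atTop (nhds (∏ i, q i (x i))) := by
  have hrow : ∀ i a, ∑ b, α i a b = 0 := fun i a => by
    rw [← Finset.add_sum_erase _ _ (Finset.mem_univ a), hα_diag, neg_add_cancel]
  have hμ : IsMutRecSolution α κ φ μ := ⟨hμ_nonneg, hμ_sum, hμ_ode⟩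
  obtain ⟨δ, hδ, hμδ⟩ := hμ.exists_pos_le hα_off hrow hα_conn hφ_nonneg hκ
  set S := stdSimplex ℝ (Fin n → K) ∩ {ν | ∀ x, δ ≤ ν x}
  have hSpos : ∀ ν ∈ S, ∀ x, 0 < ν x := fun ν hν x => hδ.trans_le (hν.2 x)
  have hμS : ∀ t, 1 ≤ t → μ t ∈ S := fun t ht =>
    ⟨⟨hμ_nonneg t (by linarith), hμ_sum t (by linarith)⟩, hμδ t ht⟩
  have hP := prodDist_pos hq_pos
  have hV := tendsto_zero_of_hasDerivWithinAt_le_neg (isCompact_stdSimplex_inter δ)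
    (continuous_relEntropy (prodDist q))
    ((continuousOn_mutEntropyProd hP).mono fun ν hν => hSpos ν hν)
    (fun ν hν => relEntropy_nonneg hP hν.1.1)
    (fun ν hν => mutEntropyProd_nonneg hα_off hP (hSpos ν hν))
    (fun ν hν h => by
      rw [eq_of_mutEntropyProd_eq_zero hα_off hα_conn hP (hSpos ν hν)
        (by rw [hν.1.2, sum_prodDist hq_sum]) h, relEntropy_self fun x => (hP x).ne'])
    hμS
    (fun t ht => hasDerivWithinAt_relEntropy (fun x => (hP x).ne')
      (fun x => hμ.hasDerivWithinAt_Ici zero_le_one ht x) (fun x => (hSpos _ (hμS t ht) x).ne'))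
    (fun t ht => sum_mutRecRHS_mul_log_div_le hrow hκ hφ_symm hφ_nonneg
      (mutation_prodDist hrow hq_stat) hP prodDist_crossover (hSpos _ (hμS t ht)))
  exact tendsto_pi_nhds.1 (tendsto_of_tendsto_comp_zero (isCompact_stdSimplex_inter δ)
    (continuous_relEntropy _) (fun ν hν => eq_of_relEntropy_eq_zero hP hν.1.1)
    (eventually_atTop.2 ⟨1, hμS⟩) hV)
end

section
/- Fix a finite alphabet K, genome length n, X = (Fin n → K), a subset I ⊆ Fin n, a symmetric nonnegative similarity function φ on pairs of I-substrings, and κ ≥ 0. Let μ : ℝ → (X → ℝ) be a differentiable family of probability measures solving the recombination-only equation dμ(x)/dt = κ·∑_{y_I} ( φ(y_I,x_I)·μ_I(x_I)·μ(x_{Λ∖I}, y_I) − φ(x_I,y_I)·μ_I(y_I)·μ(x) ). Then both marginal distributions are conserved: for every a : I → K the derivative d/dt μ_I(a) = 0, and for every b : (Λ∖I) → K the derivative d/dt μ_{Λ∖I}(b) = 0. -/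
/-- The right-hand side of the recombination-only equation on the subset `I`. -/
def recRHS {K : Type*} [Fintype K] [DecidableEq K] {n : ℕ}
    (I : Finset (Fin n)) (φ : (↥I → K) → (↥I → K) → ℝ) (κ : ℝ)
    (μ : (Fin n → K) → ℝ) (x : Fin n → K) : ℝ :=
  κ * ∑ a : ↥I → K,
      (φ a (subword I x) * marginal μ I (subword I x) * μ (substGenome I x a)
        - φ (subword I x) a * marginal μ I a * μ x)

def genomeEquivProd (K : Type*) {n : ℕ} (I : Finset (Fin n)) :
    ((↥I → K) × (↥(Iᶜ) → K)) ≃ (Fin n → K) where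
  toFun p j := if h : j ∈ I then p.1 ⟨j, h⟩ else p.2 ⟨j, Finset.mem_compl.2 h⟩
  invFun x := (subword I x, subword Iᶜ x)
  left_inv p := by
    refine Prod.ext (funext fun i => ?_) (funext fun i => ?_)
    · simp [subword, i.2]
    · simp [subword, Finset.mem_compl.1 i.2]
  right_inv x := by
    funext j
    by_cases h : j ∈ I <;> simp [subword, h]

section GenomeEquivProd

variable {K : Type*} {n : ℕ} (I : Finset (Fin n))

@[simp]
lemma subword_genomeEquivProd (p : (↥I → K) × (↥(Iᶜ) → K)) :
    subword I (genomeEquivProd K I p) = p.1 :=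
  congrArg Prod.fst ((genomeEquivProd K I).symm_apply_apply p)

@[simp]
lemma subword_compl_genomeEquivProd (p : (↥I → K) × (↥(Iᶜ) → K)) :
    subword Iᶜ (genomeEquivProd K I p) = p.2 :=
  congrArg Prod.snd ((genomeEquivProd K I).symm_apply_apply p)

@[simp]
lemma substGenome_genomeEquivProd (a c : ↥I → K) (b : ↥(Iᶜ) → K) :
    substGenome I (genomeEquivProd K I (a, b)) c = genomeEquivProd K I (c, b) := by
  funext j
  by_cases h : j ∈ I <;> simp [substGenome, genomeEquivProd, h]

end GenomeEquivProd

section Marginal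

variable {K : Type*} [Fintype K] [DecidableEq K] {n : ℕ} (I : Finset (Fin n))

lemma marginal_eq_sum_compl (ν : (Fin n → K) → ℝ) (a : ↥I → K) :
    marginal ν I a = ∑ b : ↥(Iᶜ) → K, ν (genomeEquivProd K I (a, b)) := by
  rw [marginal, ← (genomeEquivProd K I).sum_comp, Fintype.sum_prod_type, Finset.sum_comm]
  simp

lemma marginal_compl_eq_sum (ν : (Fin n → K) → ℝ) (b : ↥(Iᶜ) → K) :
    marginal ν Iᶜ b = ∑ a : ↥I → K, ν (genomeEquivProd K I (a, b)) := by
  rw [marginal, ← (genomeEquivProd K I).sum_comp, Fintype.sum_prod_type]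
  simp

lemma hasDerivAt_marginal {μ : ℝ → (Fin n → K) → ℝ} {μ' : (Fin n → K) → ℝ} {t : ℝ}
    (hμ : ∀ x, HasDerivAt (fun s => μ s x) (μ' x) t) (a : ↥I → K) :
    HasDerivAt (fun s => marginal (μ s) I a) (marginal μ' I a) t :=
  HasDerivAt.fun_sum fun x _ => by
    split_ifs
    exacts [hμ x, hasDerivAt_const t 0]

variable (φ : (↥I → K) → (↥I → K) → ℝ) (κ : ℝ) (ν : (Fin n → K) → ℝ)

lemma recRHS_genomeEquivProd (c : ↥I → K) (b : ↥(Iᶜ) → K) :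
    recRHS I φ κ ν (genomeEquivProd K I (c, b)) =
      κ * ∑ a : ↥I → K,
        (φ a c * marginal ν I c * ν (genomeEquivProd K I (a, b))
          - φ c a * marginal ν I a * ν (genomeEquivProd K I (c, b))) := by
  simp [recRHS]

/-- Summed over the `Iᶜ`-part, the gain term becomes `κ φ(c,a) μ_I(a) μ_I(c)` and the loss
term `κ φ(a,c) μ_I(a) μ_I(c)`. -/
lemma marginal_recRHS (hφ : ∀ a b, φ a b = φ b a) (a : ↥I → K) :
    marginal (recRHS I φ κ ν) I a = 0 := by
  simp_rw [marginal_eq_sum_compl, recRHS_genomeEquivProd, ← Finset.mul_sum,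
    Finset.sum_sub_distrib]
  refine mul_eq_zero_of_right κ (sub_eq_zero.2 ?_)
  conv_lhs => rw [Finset.sum_comm]
  simp_rw [← Finset.mul_sum, ← Finset.sum_mul, ← Finset.mul_sum, ← marginal_eq_sum_compl,
    Finset.sum_mul, hφ a]
  exact Finset.sum_congr rfl fun c _ => by ring

/-- Summed over the `I`-part, the gain and loss terms coincide after exchanging the two
`I`-substrings. -/
lemma marginal_compl_recRHS (b : ↥(Iᶜ) → K) :
    marginal (recRHS I φ κ ν) Iᶜ b = 0 := by
  simp_rw [marginal_compl_eq_sum, recRHS_genomeEquivProd, ← Finset.mul_sum,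
    Finset.sum_sub_distrib, sub_eq_zero.2 Finset.sum_comm, mul_zero]

end Marginal

theorem recombination_conserves_marginals_general
    {K : Type*} [Fintype K] [DecidableEq K] {n : ℕ}
    (I : Finset (Fin n))
    (φ : (↥I → K) → (↥I → K) → ℝ)
    (hφ_symm : ∀ a b, φ a b = φ b a)
    (κ : ℝ)
    (μ : ℝ → (Fin n → K) → ℝ)
    (hμ_ode : ∀ t x, HasDerivAt (fun s => μ s x) (recRHS I φ κ (μ t) x) t) :
    ∀ t : ℝ,
      (∀ a : ↥I → K, deriv (fun s => marginal (μ s) I a) t = 0) ∧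
      (∀ b : ↥(Iᶜ) → K, deriv (fun s => marginal (μ s) Iᶜ b) t = 0) := by
  intro t
  refine ⟨fun a => ?_, fun b => ?_⟩
  · rw [(hasDerivAt_marginal I (hμ_ode t) a).deriv]
    exact marginal_recRHS I φ κ (μ t) hφ_symm a
  · rw [(hasDerivAt_marginal Iᶜ (hμ_ode t) b).deriv]
    exact marginal_compl_recRHS I φ κ (μ t) b

/-- along any differentiable solution of the recombination-only equation,
both marginal distributions (on `I` and on its complement) are conserved. -/
theorem recombination_conserves_marginals
    {K : Type*} [Fintype K] [DecidableEq K] {n : ℕ}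
    (I : Finset (Fin n))
    (φ : (↥I → K) → (↥I → K) → ℝ)
    (hφ_symm : ∀ a b, φ a b = φ b a)
    (hφ_nonneg : ∀ a b, 0 ≤ φ a b)
    (κ : ℝ) (hκ : 0 ≤ κ)
    (μ : ℝ → (Fin n → K) → ℝ)
    (hμ_nonneg : ∀ t x, 0 ≤ μ t x)
    (hμ_sum : ∀ t, ∑ x, μ t x = 1)
    (hμ_ode : ∀ t x, HasDerivAt (fun s => μ s x) (recRHS I φ κ (μ t) x) t) :
    ∀ t : ℝ,
      (∀ a : ↥I → K, deriv (fun s => marginal (μ s) I a) t = 0) ∧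
      (∀ b : ↥(Iᶜ) → K, deriv (fun s => marginal (μ s) Iᶜ b) t = 0) :=
  recombination_conserves_marginals_general I φ hφ_symm κ μ hμ_ode
end
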